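/- arXiv:1709.04443 — 10 statements merged into one kernel-verified Lean document; each statement's English description precedes it below -/
import Mathlib

section
/- Let n = 2^e + d with 0 ≤ d < 2^e and let k ≥ 2. Then zcl_k(n) = min(zcl_k(d) + k·2^e, (k−1)(2^{e+1} − 1)), where zcl_k(0) = 0. -/
/-!
By Lucas' theorem `(b + c).choose b` is odd exactly when `b` and `c` have no binary digit in
common, so expanding `∏ (x_i + x_k)^(a_i)` shows that `zcl_k(n)` is the largest value of
`∑ (b_i + c_i)` over tuples with `b_i &&& c_i = 0`, `b_i ≤ n` and `∑ c_i ≤ n`: the exponents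
of `x_i` and of `x_k` in a monomial that survives modulo the `x_j^(n+1)`.

Let `n = 2^e + d`. Since `b_i + c_i = b_i ||| c_i < 2^(e+1)`, the sum is at most
`(k-1)(2^(e+1) - 1)`. Replacing each `b_i` by its submask `b_i - 2^e` (truncated) and removing
from the `c_i` binary digits worth exactly `2^e` (numbers below `2^(e+1)` with sum at least `2^e`
always contain such digits) leaves a tuple admissible for `d` and loses at most `k 2^e`; this
gives the bound `zcl_k(d) + k 2^e`.
Conversely an optimal tuple for `d` lifts to `n` by adding `2^e` to every `b_i` and filling free
digits below `2^e` of the `c_i` with a total of `2^e`; if there is no room for that, `b_i = n` with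
`c_i` its complement in `2^(e+1) - 1` already attains `(k-1)(2^(e+1) - 1)`.
-/

open MvPolynomial in
/-- `zcl k n` is the maximum of `a_1 + ... + a_(k-1)` over tuples of natural numbers
such that the product of the `(x_i + x_k)^(a_i)` is nonzero in
`(Z/2)[x_1, ..., x_k] / (x_1^(n+1), ..., x_k^(n+1))`. (For `k ≥ 1` the ring has
`(k-1)+1 = k` variables, the last one playing the role of `x_k`.) -/
noncomputable def zcl (k n : ℕ) : ℕ :=
  sSup {s : ℕ | ∃ a : Fin (k - 1) → ℕ, s = ∑ i, a i ∧
    Ideal.Quotient.mk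
      (Ideal.span (Set.range fun i : Fin (k - 1 + 1) =>
        (X i : MvPolynomial (Fin (k - 1 + 1)) (ZMod 2)) ^ (n + 1)))
      (∏ i : Fin (k - 1), (X i.castSucc + X (Fin.last (k - 1))) ^ a i) ≠ 0}

namespace Nat

theorem add_eq_or_of_and_eq_zero {x y : ℕ} (h : x &&& y = 0) : x + y = x ||| y := by
  have hlt : x + y < 2 ^ (x + y) := Nat.lt_two_pow_self
  have hx : x < 2 ^ (x + y) := by omega
  have hy : y < 2 ^ (x + y) := by omega
  have key := BitVec.add_eq_or_of_and_eq_zero (BitVec.ofNat (x + y) x) (BitVec.ofNat (x + y) y)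
    (BitVec.eq_of_toNat_eq (by simp [Nat.mod_eq_of_lt hx, Nat.mod_eq_of_lt hy, h]))
  simpa [BitVec.toNat_add, Nat.mod_eq_of_lt hx, Nat.mod_eq_of_lt hy, Nat.mod_eq_of_lt hlt]
    using congrArg BitVec.toNat key

theorem testBit_add_of_and_eq_zero {x y : ℕ} (h : x &&& y = 0) (i : ℕ) :
    (x + y).testBit i = (x.testBit i || y.testBit i) := by
  rw [add_eq_or_of_and_eq_zero h, testBit_or]

theorem and_eq_zero_iff_testBit {x y : ℕ} :
    x &&& y = 0 ↔ ∀ i, x.testBit i → y.testBit i = false := by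
  refine ⟨fun h i hx => ?_, fun h => zero_of_testBit_eq_false fun i => ?_⟩
  · simpa [hx] using congrArg (testBit · i) h
  · cases hx : x.testBit i <;> simp [hx, h i]

theorem and_two_pow_sub_one_sub_eq_zero {x k : ℕ} (hx : x < 2 ^ k) :
    x &&& (2 ^ k - 1 - x) = 0 := by
  rw [and_eq_zero_iff_testBit]
  intro i hi
  rw [Nat.sub_sub, Nat.add_comm, testBit_two_pow_sub_succ hx]
  simp [hi]

def Submask (x y : ℕ) : Prop := ∀ i, x.testBit i → y.testBit i

namespace Submask

variable {x y z f g g' : ℕ}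

theorem refl (x : ℕ) : Submask x x := fun _ h => h

theorem zero (x : ℕ) : Submask 0 x := fun i h => by simp at h

theorem trans (hxy : Submask x y) (hyz : Submask y z) : Submask x z := fun i h => hyz i (hxy i h)

theorem le (h : Submask x y) : x ≤ y := le_of_testBit h

theorem and_eq_zero {x' y' : ℕ} (hx : Submask x x') (hy : Submask y y') (h : x' &&& y' = 0) :
    x &&& y = 0 := by
  rw [and_eq_zero_iff_testBit] at h ⊢
  intro i hi
  cases hyi : y.testBit i
  · rfl
  · simpa [hy i hyi] using h i (hx i hi)

theorem add (hxy : x &&& y = 0) (hx : Submask x z) (hy : Submask y z) : Submask (x + y) z := by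
  intro i hi
  rw [testBit_add_of_and_eq_zero hxy, Bool.or_eq_true] at hi
  exact hi.elim (hx i) (hy i)

theorem testBit_sub (h : Submask g f) (i : ℕ) :
    (f - g).testBit i = (f.testBit i && !g.testBit i) := by
  have hdisj : g &&& f.ldiff g = 0 := by
    rw [and_eq_zero_iff_testBit]; intro j hj; simp [testBit_ldiff, hj]
  have hf : g + f.ldiff g = f := eq_of_testBit_eq fun j => by
    rw [testBit_add_of_and_eq_zero hdisj, testBit_ldiff]
    cases hj : g.testBit j <;> simp [h j, hj]
  rw [← hf, Nat.add_sub_cancel_left, testBit_ldiff, hf]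

theorem sub (h : Submask g f) : Submask (f - g) f := fun i hi => by
  rw [h.testBit_sub] at hi; simp_all

theorem and_sub_eq_zero (h : Submask g f) : g &&& (f - g) = 0 := by
  rw [and_eq_zero_iff_testBit]; intro i hi; simp [h.testBit_sub, hi]

theorem add_of_sub (hg : Submask g f) (hg' : Submask g' (f - g)) : Submask (g + g') f :=
  add (and_eq_zero (refl g) hg' hg.and_sub_eq_zero) hg (hg'.trans hg.sub)

end Submask

theorem submask_two_pow_of_testBit {e f : ℕ} (h : f.testBit e) : Submask (2 ^ e) f := by
  intro i hi
  rw [testBit_two_pow, decide_eq_true_iff] at hi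
  exact hi ▸ h

theorem submask_sub_two_pow {b e : ℕ} (hb : b < 2 ^ (e + 1)) : Submask (b - 2 ^ e) b := by
  rcases lt_or_ge b (2 ^ e) with hlt | hge
  · rw [Nat.sub_eq_zero_of_le hlt.le]; exact Submask.zero b
  · have : b - 2 ^ e = b % 2 ^ e := by
      rw [Nat.mod_eq_sub_mod hge, Nat.mod_eq_of_lt (by rw [pow_succ] at hb; omega)]
    intro i hi
    rw [this, testBit_mod_two_pow] at hi
    simp_all

theorem submask_two_pow_sub_one_sub {x y k : ℕ} (hx : x < 2 ^ k) (hy : y < 2 ^ k)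
    (h : y &&& x = 0) : Submask y (2 ^ k - 1 - x) := by
  intro i hi
  rw [Nat.sub_sub, Nat.add_comm, testBit_two_pow_sub_succ hx]
  have hik : i < k := by
    by_contra hki
    rw [testBit_lt_two_pow (lt_of_lt_of_le hy (Nat.pow_le_pow_right two_pos (not_lt.mp hki)))] at hi
    exact absurd hi (by simp)
  simp [hik, and_eq_zero_iff_testBit.mp h i hi]

theorem submask_pi_single_two_pow {ι : Type*} [DecidableEq ι] {f : ι → ℕ} {j : ι} {e : ℕ}
    (h : (f j).testBit e) (i : ι) : Submask ((Pi.single j (2 ^ e) : ι → ℕ) i) (f i) := by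
  rcases eq_or_ne i j with rfl | hij
  · simpa using submask_two_pow_of_testBit h
  · simpa [hij] using Submask.zero (f i)

theorem exists_submask_sum_eq_two_pow {ι : Type*} [Fintype ι] (e : ℕ) (f : ι → ℕ)
    (hf : ∀ i, f i < 2 ^ (e + 1)) (hsum : 2 ^ e ≤ ∑ i, f i) :
    ∃ g : ι → ℕ, (∀ i, Submask (g i) (f i)) ∧ ∑ i, g i = 2 ^ e := by
  classical
  induction e generalizing f with
  | zero =>
    obtain ⟨j, -, hj⟩ := Finset.exists_ne_zero_of_sum_ne_zero (by omega : ∑ i, f i ≠ 0)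
    have hj1 : f j = 1 := by have := hf j; omega
    exact ⟨Pi.single j 1, submask_pi_single_two_pow (e := 0) (by simp [hj1]), by simp⟩
  | succ e ih =>
    by_cases hbit : ∃ j, (f j).testBit (e + 1)
    · obtain ⟨j, hj⟩ := hbit
      exact ⟨Pi.single j (2 ^ (e + 1)), submask_pi_single_two_pow hj, by simp⟩
    push Not at hbit
    have hf' : ∀ i, f i < 2 ^ (e + 1) := fun i => lt_pow_two_of_testBit _ fun j hj => by
      rcases hj.lt_or_eq with hj | rfl
      · exact testBit_lt_two_pow (lt_of_lt_of_le (hf i) (Nat.pow_le_pow_right two_pos hj))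
      · simpa using hbit i
    obtain ⟨g₁, hg₁, hsum₁⟩ := ih f hf' (by rw [pow_succ] at hsum; omega)
    have hsub : ∑ i, (f i - g₁ i) = ∑ i, f i - 2 ^ e := by
      rw [Finset.sum_tsub_distrib _ fun i _ => (hg₁ i).le, hsum₁]
    obtain ⟨g₂, hg₂, hsum₂⟩ := ih (fun i => f i - g₁ i)
      (fun i => by have := hf' i; omega) (by rw [hsub]; rw [pow_succ] at hsum; omega)
    refine ⟨fun i => g₁ i + g₂ i, fun i => (hg₁ i).add_of_sub (hg₂ i), ?_⟩
    rw [Finset.sum_add_distrib, hsum₁, hsum₂, pow_succ]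
    ring

theorem exists_submask_sum_le {ι : Type*} [Fintype ι] {e d : ℕ} (hd : d < 2 ^ e)
    (c : ι → ℕ) (hc : ∑ i, c i ≤ 2 ^ e + d) :
    ∃ r : ι → ℕ, (∀ i, Submask (r i) (c i)) ∧ ∑ i, r i ≤ d ∧
      ∑ i, c i ≤ ∑ i, r i + 2 ^ e := by
  rcases lt_or_ge (∑ i, c i) (2 ^ e) with hlt | hge
  · exact ⟨0, fun i => Submask.zero (c i), by simp, by simp; omega⟩
  have hc' : ∀ i, c i < 2 ^ (e + 1) := fun i => by
    have := Finset.single_le_sum (fun j _ => Nat.zero_le (c j)) (Finset.mem_univ i)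
    rw [pow_succ]; omega
  obtain ⟨g, hg, hsum⟩ := exists_submask_sum_eq_two_pow e c hc' hge
  have hsub : ∑ i, (c i - g i) = ∑ i, c i - 2 ^ e := by
    rw [Finset.sum_tsub_distrib _ fun i _ => (hg i).le, hsum]
  refine ⟨fun i => c i - g i, fun i => (hg i).sub, ?_, ?_⟩ <;> simp only [hsub] <;> omega

theorem odd_add_choose_iff (b c : ℕ) : Odd ((b + c).choose b) ↔ b &&& c = 0 := by
  induction b using Nat.strong_induction_on generalizing c with
  | _ b ih =>
  rcases b.eq_zero_or_pos with rfl | hb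
  · simp
  have hlucas : (b + c).choose b % 2 =
      ((b + c) % 2).choose (b % 2) * ((b + c) / 2).choose (b / 2) % 2 :=
    Choose.choose_modEq_choose_mod_mul_choose_div_nat
  have hand : b &&& c = 0 ↔ ¬(b % 2 = 1 ∧ c % 2 = 1) ∧ b / 2 &&& c / 2 = 0 := by
    rw [← Nat.and_mod_two_eq_one, ← Nat.and_div_two]; omega
  rw [Nat.odd_iff, hlucas, hand]
  by_cases hodd : b % 2 = 1 ∧ c % 2 = 1
  · simp [hodd, show (b + c) % 2 = 0 by omega]
  · have hlow : ((b + c) % 2).choose (b % 2) = 1 := by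
      rw [show (b + c) % 2 = b % 2 + c % 2 by omega]
      rcases Nat.mod_two_eq_zero_or_one b with h | h <;> simp_all
    rw [hlow, one_mul, show (b + c) / 2 = b / 2 + c / 2 by omega, ← Nat.odd_iff,
      ih _ (Nat.div_lt_self hb one_lt_two)]
    simp [hodd]

end Nat

open MvPolynomial Finset

theorem MvPolynomial.mk_span_X_pow_ne_zero_iff {σ R : Type*} [CommRing R] (N : ℕ)
    (p : MvPolynomial σ R) :
    Ideal.Quotient.mk (Ideal.span (Set.range fun i => (X i : MvPolynomial σ R) ^ N)) p ≠ 0 ↔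
      ∃ μ ∈ p.support, ∀ i, μ i < N := by
  have hrange : (Set.range fun i => (X i : MvPolynomial σ R) ^ N) =
      (fun s => monomial s 1) '' Set.range fun i => Finsupp.single i N := by
    rw [← Set.range_comp]; simp only [Function.comp_def, X_pow_eq_monomial]
  rw [Ne, Ideal.Quotient.eq_zero_iff_mem, hrange, mem_ideal_span_monomial_image]
  simp [Finsupp.single_le_iff]

theorem MvPolynomial.prod_X_castSucc_add_X_last_pow {R : Type*} [CommSemiring R] {m : ℕ}
    (a : Fin m → ℕ) :
    ∏ i, (X i.castSucc + X (Fin.last m) : MvPolynomial (Fin (m + 1)) R) ^ a i =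
      ∑ b ∈ Fintype.piFinset fun i => range (a i + 1),
        monomial (Finsupp.equivFunOnFinite.symm (Fin.snoc b (∑ i, (a i - b i))))
          (∏ i, ((a i).choose (b i) : R)) := by
  classical
  simp_rw [add_pow, prod_univ_sum]
  refine sum_congr rfl fun b _ => ?_
  rw [monomial_eq, Finsupp.prod_fintype _ _ (fun _ => pow_zero _), Fin.prod_univ_castSucc]
  simp only [Finsupp.coe_equivFunOnFinite_symm, Fin.snoc_castSucc, Fin.snoc_last,
    prod_mul_distrib, prod_pow_eq_pow_sum, map_prod, map_natCast]
  ring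

section Admissible

variable {ι : Type*} [Fintype ι]

structure IsAdmissible (n : ℕ) (b c : ι → ℕ) : Prop where
  and_eq_zero : ∀ i, b i &&& c i = 0
  le : ∀ i, b i ≤ n
  sum_le : ∑ i, c i ≤ n

variable (ι) in
def admissibleSums (n : ℕ) : Set ℕ :=
  {s | ∃ b c : ι → ℕ, IsAdmissible n b c ∧ ∑ i, (b i + c i) = s}

theorem zero_mem_admissibleSums (n : ℕ) : 0 ∈ admissibleSums ι n :=
  ⟨0, 0, ⟨fun _ => by simp, fun _ => Nat.zero_le n, by simp⟩, by simp⟩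

theorem le_of_mem_admissibleSums {n s : ℕ} (hs : s ∈ admissibleSums ι n) :
    s ≤ (Fintype.card ι + 1) * n := by
  obtain ⟨b, c, h, rfl⟩ := hs
  have hb : ∑ i, b i ≤ Fintype.card ι * n := by
    simpa using sum_le_sum fun i (_ : i ∈ univ) => h.le i
  rw [sum_add_distrib, add_mul, one_mul]
  exact add_le_add hb h.sum_le

theorem bddAbove_admissibleSums (n : ℕ) : BddAbove (admissibleSums ι n) :=
  ⟨_, fun _ => le_of_mem_admissibleSums⟩

theorem IsAdmissible.sum_le_of_lt_two_pow {n k : ℕ} {b c : ι → ℕ} (h : IsAdmissible n b c)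
    (hn : n < 2 ^ k) : ∑ i, (b i + c i) ≤ Fintype.card ι * (2 ^ k - 1) := by
  have hlt : ∀ i, b i + c i < 2 ^ k := fun i => by
    have hc := single_le_sum (fun j _ => Nat.zero_le (c j)) (mem_univ i)
    rw [Nat.add_eq_or_of_and_eq_zero (h.and_eq_zero i)]
    exact Nat.or_lt_two_pow (by have := h.le i; omega) (by have := h.sum_le; omega)
  simpa using sum_le_sum fun i (_ : i ∈ univ) => Nat.le_sub_one_of_lt (hlt i)

theorem IsAdmissible.sum_le_sSup_add {e d : ℕ} {b c : ι → ℕ}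
    (h : IsAdmissible (2 ^ e + d) b c) (hd : d < 2 ^ e) :
    ∑ i, (b i + c i) ≤ sSup (admissibleSums ι d) + (Fintype.card ι + 1) * 2 ^ e := by
  obtain ⟨r, hr, hrd, hcr⟩ := Nat.exists_submask_sum_le hd c h.sum_le
  have hb : ∀ i, Nat.Submask (b i - 2 ^ e) (b i) := fun i =>
    Nat.submask_sub_two_pow (by have := h.le i; rw [pow_succ]; omega)
  have hmem : ∑ i, (b i - 2 ^ e + r i) ∈ admissibleSums ι d :=
    ⟨_, _, ⟨fun i => (hb i).and_eq_zero (hr i) (h.and_eq_zero i),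
      fun i => by have := h.le i; omega, hrd⟩, rfl⟩
  have hsup := le_csSup (bddAbove_admissibleSums d) hmem
  have hbsum : ∑ i, b i ≤ ∑ i, (b i - 2 ^ e) + Fintype.card ι * 2 ^ e := by
    calc ∑ i, b i ≤ ∑ i, (b i - 2 ^ e + 2 ^ e) := sum_le_sum fun i _ => le_tsub_add
      _ = _ := by simp [sum_add_distrib]
  rw [sum_add_distrib] at hsup ⊢
  rw [add_mul, one_mul]
  omega

theorem card_mul_mem_admissibleSums {n k : ℕ} (hn : n < 2 ^ k)
    (h : Fintype.card ι * (2 ^ k - 1 - n) ≤ n) :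
    Fintype.card ι * (2 ^ k - 1) ∈ admissibleSums ι n := by
  refine ⟨fun _ => n, fun _ => 2 ^ k - 1 - n,
    ⟨fun _ => Nat.and_two_pow_sub_one_sub_eq_zero hn, fun _ => le_rfl, by simpa using h⟩, ?_⟩
  simp only [sum_const, smul_eq_mul]
  congr 1
  omega

theorem add_mem_admissibleSums_two_pow_add {e d s : ℕ} (hs : s ∈ admissibleSums ι d)
    (hd : d < 2 ^ e)
    (h : s + (Fintype.card ι + 1) * 2 ^ e ≤ Fintype.card ι * (2 ^ (e + 1) - 1)) :
    s + (Fintype.card ι + 1) * 2 ^ e ∈ admissibleSums ι (2 ^ e + d) := by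
  obtain ⟨β, γ, hβγ, rfl⟩ := hs
  have hβ : ∀ i, β i < 2 ^ e := fun i => by have := hβγ.le i; omega
  have hγ : ∀ i, γ i < 2 ^ e := fun i => by
    have := single_le_sum (fun j _ => Nat.zero_le (γ j)) (mem_univ i); have := hβγ.sum_le; omega
  set m := Fintype.card ι
  have hm : m * (2 ^ (e + 1) - 1) = m * (2 ^ e - 1) + m * 2 ^ e := by
    rw [← Nat.mul_add]; congr 1; rw [pow_succ]; omega
  rw [add_mul, one_mul, hm] at h
  -- `c i` grows `γ i` inside the complement `F i` of `β i` below `2 ^ e`, so that it stays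
  -- disjoint from `b i = 2 ^ e + β i`, the complement of `F i` below `2 ^ (e + 1)`.
  set F : ι → ℕ := fun i => 2 ^ e - 1 - β i
  have hF : ∀ i, F i < 2 ^ e := fun i => by have := Nat.two_pow_pos e; simp only [F]; omega
  have hγF : ∀ i, Nat.Submask (γ i) (F i) := fun i =>
    Nat.submask_two_pow_sub_one_sub (hβ i) (hγ i)
      (by rw [Nat.land_comm]; exact hβγ.and_eq_zero i)
  have hsumFγ : ∑ i, (F i - γ i) = m * (2 ^ e - 1) - ∑ i, (β i + γ i) := by
    rw [sum_tsub_distrib _ fun i _ => (hγF i).le, sum_tsub_distrib _ fun i _ => by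
      have := hβ i; omega, sum_const, card_univ, smul_eq_mul, sum_add_distrib, Nat.sub_sub]
  obtain ⟨t, ht, hsumt⟩ := Nat.exists_submask_sum_eq_two_pow e (fun i => F i - γ i)
    (fun i => by have := hF i; rw [pow_succ]; omega) (by rw [hsumFγ]; omega)
  refine ⟨fun i => 2 ^ e + β i, fun i => γ i + t i, ⟨fun i => ?_, fun i => ?_, ?_⟩, ?_⟩
  · have hcompl : (2 ^ e + β i) &&& F i = 0 := by
      have := Nat.and_two_pow_sub_one_sub_eq_zero (k := e + 1) (x := F i)
        (by have := hF i; rw [pow_succ]; omega)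
      rwa [Nat.land_comm, show 2 ^ (e + 1) - 1 - F i = 2 ^ e + β i by
        have := hβ i; simp only [F]; rw [pow_succ]; omega] at this
    exact (Nat.Submask.refl _).and_eq_zero ((hγF i).add_of_sub (ht i)) hcompl
  · have := hβγ.le i; omega
  · have := hβγ.sum_le; rw [sum_add_distrib, hsumt]; omega
  · simp only [sum_add_distrib, sum_const, card_univ, smul_eq_mul, hsumt, add_mul, one_mul]
    ring

theorem sSup_admissibleSums_two_pow_add {e d : ℕ} (hd : d < 2 ^ e) :
    sSup (admissibleSums ι (2 ^ e + d)) =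
      min (sSup (admissibleSums ι d) + (Fintype.card ι + 1) * 2 ^ e)
        (Fintype.card ι * (2 ^ (e + 1) - 1)) := by
  refine le_antisymm (csSup_le ⟨0, zero_mem_admissibleSums _⟩ ?_) ?_
  · rintro s ⟨b, c, h, rfl⟩
    exact le_min (h.sum_le_sSup_add hd) (h.sum_le_of_lt_two_pow (by rw [pow_succ]; omega))
  have hZ : sSup (admissibleSums ι d) ∈ admissibleSums ι d :=
    Nat.sSup_mem ⟨0, zero_mem_admissibleSums _⟩ (bddAbove_admissibleSums d)
  rcases le_total (sSup (admissibleSums ι d) + (Fintype.card ι + 1) * 2 ^ e)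
    (Fintype.card ι * (2 ^ (e + 1) - 1)) with h | h
  · rw [min_eq_left h]
    exact le_csSup (bddAbove_admissibleSums _) (add_mem_admissibleSums_two_pow_add hZ hd h)
  · rw [min_eq_right h]
    refine le_csSup (bddAbove_admissibleSums _)
      (card_mul_mem_admissibleSums (by rw [pow_succ]; omega) ?_)
    rw [pow_succ, mul_two]
    have hZle := le_of_mem_admissibleSums hZ
    set m := Fintype.card ι
    have hsplit : 2 ^ (e + 1) - 1 = (2 ^ e - 1 - d) + 2 ^ e + d := by rw [pow_succ]; omega
    rw [hsplit, Nat.mul_add, Nat.mul_add, add_mul, one_mul] at h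
    rw [add_mul, one_mul] at hZle
    rw [show 2 ^ e + 2 ^ e - 1 - (2 ^ e + d) = 2 ^ e - 1 - d by omega]
    omega

end Admissible

theorem prod_choose_ne_zero_iff {ι : Type*} [Fintype ι] {a b : ι → ℕ}
    (hb : ∀ i, b i ≤ a i) :
    (∏ i, ((a i).choose (b i) : ZMod 2)) ≠ 0 ↔ ∀ i, b i &&& (a i - b i) = 0 := by
  simp only [prod_ne_zero_iff, mem_univ, true_implies, ZMod.natCast_ne_zero_iff_odd]
  refine forall_congr' fun i => ?_
  rw [← Nat.odd_add_choose_iff, Nat.add_sub_cancel' (hb i)]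

theorem mk_prod_X_castSucc_add_X_last_pow_ne_zero_iff {m : ℕ} (n : ℕ) (a : Fin m → ℕ) :
    Ideal.Quotient.mk (Ideal.span (Set.range fun i : Fin (m + 1) =>
        (X i : MvPolynomial (Fin (m + 1)) (ZMod 2)) ^ (n + 1)))
        (∏ i : Fin m, (X i.castSucc + X (Fin.last m)) ^ a i) ≠ 0 ↔
      ∃ b c : Fin m → ℕ, IsAdmissible n b c ∧ b + c = a := by
  classical
  set E : (Fin m → ℕ) → Fin (m + 1) →₀ ℕ :=
    fun b => Finsupp.equivFunOnFinite.symm (Fin.snoc b (∑ i, (a i - b i)))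
  have hE : ∀ {b b' : Fin m → ℕ}, E b = E b' → b = b' := fun h => by
    ext i
    simpa [E] using DFunLike.congr_fun h i.castSucc
  rw [mk_span_X_pow_ne_zero_iff, prod_X_castSucc_add_X_last_pow]
  constructor
  · rintro ⟨μ, hμ, hμn⟩
    obtain ⟨b, hb, hμb⟩ := mem_biUnion.mp (support_sum hμ)
    have hba : ∀ i, b i ≤ a i := fun i => by
      have := Fintype.mem_piFinset.mp hb i; rw [mem_range] at this; omega
    rw [support_monomial] at hμb
    split_ifs at hμb with hzero
    · simp at hμb
    rw [mem_singleton] at hμb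
    subst hμb
    refine ⟨b, fun i => a i - b i,
      ⟨(prod_choose_ne_zero_iff hba).mp hzero, fun i => ?_, ?_⟩, ?_⟩
    · simpa [E, Nat.lt_succ_iff] using hμn i.castSucc
    · simpa [E, Nat.lt_succ_iff] using hμn (Fin.last m)
    · ext i; simp [Nat.add_sub_cancel' (hba i)]
  · rintro ⟨b, c, h, rfl⟩
    have hc : ∀ i, (b + c) i - b i = c i := fun i => Nat.add_sub_cancel_left _ _
    refine ⟨E b, ?_, fun i => ?_⟩
    · rw [mem_support_iff, coeff_sum, sum_eq_single b, coeff_monomial, if_pos rfl,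
        prod_choose_ne_zero_iff (a := b + c) fun i => Nat.le_add_right _ _]
      · simpa [hc] using h.and_eq_zero
      · intro b' _ hb'
        rw [coeff_monomial, if_neg fun h => hb' (hE h)]
      · intro hb
        exact absurd (Fintype.mem_piFinset.mpr fun i => mem_range.mpr (by simp)) hb
    · refine Fin.lastCases ?_ (fun i => ?_) i
      · simpa [E, hc, Nat.lt_succ_iff] using h.sum_le
      · simpa [E, Nat.lt_succ_iff] using h.le i

theorem zcl_eq_sSup_admissibleSums (k n : ℕ) :
    zcl k n = sSup (admissibleSums (Fin (k - 1)) n) := by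
  unfold zcl
  congr 1
  ext s
  simp only [Set.mem_ofPred_eq, mk_prod_X_castSucc_add_X_last_pow_ne_zero_iff, admissibleSums]
  constructor
  · rintro ⟨a, rfl, b, c, h, rfl⟩
    exact ⟨b, c, h, rfl⟩
  · rintro ⟨b, c, h, rfl⟩
    exact ⟨b + c, rfl, b, c, h, rfl⟩

/-- If `n = 2^e + d` with `0 ≤ d < 2^e` and `k ≥ 2`, then
`zcl_k(n) = min(zcl_k(d) + k*2^e, (k-1)(2^(e+1) - 1))`. -/
theorem zcl_recursion (e d k : ℕ) (hd : d < 2 ^ e) (hk : 2 ≤ k) :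
    zcl k (2 ^ e + d) = min (zcl k d + k * 2 ^ e) ((k - 1) * (2 ^ (e + 1) - 1)) := by
  rw [zcl_eq_sSup_admissibleSums, zcl_eq_sSup_admissibleSums, sSup_admissibleSums_two_pow_add hd,
    Fintype.card_fin, Nat.sub_add_cancel (by omega : 1 ≤ k)]
end

section
/- Let n = 2^e + d with 0 ≤ d < 2^e and let k ≥ 2. Define h_k(n) = zcl_k(n) − (k−1)·n, with h_k(0) = 0. Then h_k(n) = min(h_k(d) + 2^e, (k−1)(2^{e+1} − 1 − n)). -/
/-- `h k n = zcl k n - (k-1)*n`, as an integer. Note `h k 0 = 0`. -/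
noncomputable def h (k n : ℕ) : ℤ := (zcl k n : ℤ) - ((k : ℤ) - 1) * n

open Finset Finset.Colex

def bitSet (n : ℕ) : Finset ℕ := equivBitIndices n

@[simp] lemma mem_bitSet {n i : ℕ} : i ∈ bitSet n ↔ n.testBit i := by
  simp [bitSet]

@[simp] lemma sum_bitSet (n : ℕ) : ∑ i ∈ bitSet n, 2 ^ i = n :=
  equivBitIndices.symm_apply_apply n

@[simp] lemma bitSet_sum_two_pow (s : Finset ℕ) : bitSet (∑ i ∈ s, 2 ^ i) = s :=
  equivBitIndices.apply_symm_apply s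

lemma toColex_bitSet_le_iff {m n : ℕ} : toColex (bitSet m) ≤ toColex (bitSet n) ↔ m ≤ n :=
  orderIsoColex.le_iff_le

lemma bitSet_add {x y : ℕ} (h : Disjoint (bitSet x) (bitSet y)) :
    bitSet (x + y) = bitSet x ∪ bitSet y := by
  conv_lhs => rw [← sum_bitSet x, ← sum_bitSet y, ← sum_union h, bitSet_sum_two_pow]

lemma bitSet_subset_range_iff {n e : ℕ} : bitSet n ⊆ range e ↔ n < 2 ^ e := by
  refine ⟨fun h => ?_, fun h i hi => ?_⟩
  · rw [← sum_bitSet n]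
    exact Nat.geomSum_lt le_rfl fun i hi => mem_range.1 (h hi)
  · have := Nat.ge_two_pow_of_testBit (mem_bitSet.1 hi)
    exact mem_range.2 ((Nat.pow_lt_pow_iff_right (by norm_num : 1 < 2)).1 (by omega))

lemma bitSet_mod_two_pow (n e : ℕ) : bitSet (n % 2 ^ e) = (bitSet n).filter (· < e) := by
  ext i
  simp [Nat.testBit_mod_two_pow, and_comm]

lemma bitSet_two_pow (e : ℕ) : bitSet (2 ^ e) = {e} := by
  simpa using bitSet_sum_two_pow {e}

theorem disjoint_bitSet_iff_forall_mod_two_pow_add_lt {x y : ℕ} :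
    Disjoint (bitSet x) (bitSet y) ↔ ∀ i, x % 2 ^ i + y % 2 ^ i < 2 ^ i := by
  refine ⟨fun h i => ?_, fun h => disjoint_left.2 fun q hx hy => ?_⟩
  · rw [← bitSet_subset_range_iff, bitSet_add, bitSet_mod_two_pow, bitSet_mod_two_pow]
    · exact union_subset (fun b hb => mem_range.2 (mem_filter.1 hb).2)
        (fun b hb => mem_range.2 (mem_filter.1 hb).2)
    · rw [bitSet_mod_two_pow, bitSet_mod_two_pow]
      exact disjoint_filter_filter h
  · have hbit : ∀ z, q ∈ bitSet z → 2 ^ q ≤ z % 2 ^ (q + 1) := fun z hz =>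
      Nat.ge_two_pow_of_testBit (by simpa [Nat.testBit_mod_two_pow] using hz)
    have := h (q + 1)
    have := hbit x hx
    have := hbit y hy
    rw [pow_succ] at *
    omega

theorem odd_choose_add_iff (x y : ℕ) :
    Odd ((x + y).choose x) ↔ Disjoint (bitSet x) (bitSet y) := by
  have : Fact (Nat.Prime 2) := ⟨Nat.prime_two⟩
  have hne : (y + x).choose x ≠ 0 := (Nat.choose_pos (Nat.le_add_left x y)).ne'
  have hodd : Odd ((y + x).choose x) ↔ padicValNat 2 ((y + x).choose x) = 0 := by
    simp [padicValNat.eq_zero_iff, hne, Nat.odd_iff, Nat.dvd_iff_mod_eq_zero]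
  have hlog : Nat.log 2 (y + x) < y + x + 1 := by
    rcases eq_or_ne (y + x) 0 with h0 | h0
    · simp [h0]
    · exact Nat.log_lt_of_lt_pow h0 (Nat.lt_two_pow_self.trans (Nat.pow_lt_pow_succ one_lt_two))
  -- Kummer: the 2-adic valuation counts the carries in the binary addition of `x` and `y`
  rw [add_comm, hodd, padicValNat_choose' hlog, card_eq_zero, filter_eq_empty_iff,
    disjoint_bitSet_iff_forall_mod_two_pow_add_lt]
  refine ⟨fun h i => ?_, fun h i _ => not_le.2 (h i)⟩
  by_cases hi : i ∈ Ico 1 (y + x + 1)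
  · exact not_le.1 (h hi)
  · rcases Nat.eq_zero_or_pos i with rfl | hi0
    · simp [Nat.mod_one]
    · have h1 : y + x < 2 ^ i := Nat.lt_two_pow_self.trans_le
        (Nat.pow_le_pow_right two_pos (by simp at hi; omega))
      have := Nat.mod_le x (2 ^ i)
      have := Nat.mod_le y (2 ^ i)
      omega

theorem Finset.exists_toColex_le_disjoint_union_le {α : Type*} [LinearOrder α]
    [LocallyFiniteOrderBot α] {J M N : Finset α} (hJN : toColex J ≤ toColex N) :
    ∃ T, toColex T ≤ toColex M ∧ Disjoint T N ∧ toColex (J ∪ M) ≤ toColex (N ∪ T) := by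
  rw [toColex_le_toColex] at hJN
  by_cases hMN : Disjoint M N
  · refine ⟨M, le_rfl, hMN, toColex_le_toColex.2 fun a ha ha' => ?_⟩
    simp only [mem_union, not_or] at ha ha'
    obtain ⟨b, hbN, hbJ, hab⟩ := hJN (ha.resolve_right ha'.2) ha'.1
    exact ⟨b, mem_union_left _ hbN, by simp [hbJ, disjoint_right.1 hMN hbN], hab⟩
  · obtain ⟨q, hq, hqmax⟩ : ∃ q ∈ M ∩ N, ∀ x ∈ M, x ∈ N → x ≤ q :=
      ⟨_, max'_mem _ (not_disjoint_iff_nonempty_inter.1 hMN),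
        fun x hxM hxN => le_max' _ x (mem_inter.2 ⟨hxM, hxN⟩)⟩
    rw [mem_inter] at hq
    -- keep `M` above its top common element `q` with `N`, and fill in all of `N`'s gaps below `q`
    refine ⟨M.filter (q < ·) ∪ (Iio q \ N), toColex_le_toColex.2 fun a ha ha' => ?_,
      disjoint_left.2 fun a ha haN => ?_, toColex_le_toColex.2 fun a ha ha' => ?_⟩
    · simp only [mem_union, mem_filter, mem_sdiff, mem_Iio] at ha
      exact ⟨q, hq.1, by simp, (ha.resolve_left fun h => ha' h.1).1.le⟩
    · simp only [mem_union, mem_filter, mem_sdiff, mem_Iio] at ha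
      rcases ha with ha | ha
      · exact (hqmax a ha.1 haN).not_gt ha.2
      · exact ha.2 haN
    · simp only [mem_union, mem_filter, mem_sdiff, mem_Iio, not_or, not_and, not_lt] at ha ha'
      have hqa : q < a :=
        lt_of_le_of_ne (not_lt.1 fun h => ha'.2.2 h ha'.1) (by rintro rfl; exact ha'.1 hq.2)
      have haJ : a ∈ J := ha.resolve_right fun haM => (ha'.2.1 haM).not_gt hqa
      obtain ⟨b, hbN, hbJ, hab⟩ := hJN haJ ha'.1
      refine ⟨b, mem_union_left _ hbN, ?_, hab⟩
      simp only [mem_union, not_or]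
      exact ⟨hbJ, fun hbM => (hqmax b hbM hbN).not_gt (hqa.trans_le hab)⟩

theorem exists_le_disjoint_bitSet_add_le {j m n : ℕ} (hjm : Disjoint (bitSet j) (bitSet m))
    (hjn : j ≤ n) : ∃ t ≤ m, Disjoint (bitSet t) (bitSet n) ∧ j + m ≤ n + t := by
  obtain ⟨T, hTM, hTN, hle⟩ :=
    exists_toColex_le_disjoint_union_le (M := bitSet m) (toColex_bitSet_le_iff.2 hjn)
  refine ⟨∑ i ∈ T, 2 ^ i, ?_, by rwa [bitSet_sum_two_pow], ?_⟩
  · rwa [← toColex_bitSet_le_iff, bitSet_sum_two_pow]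
  · have hTn : Disjoint (bitSet n) (bitSet (∑ i ∈ T, 2 ^ i)) := by
      rwa [bitSet_sum_two_pow, disjoint_comm]
    rwa [← toColex_bitSet_le_iff, bitSet_add hjm, bitSet_add hTn, bitSet_sum_two_pow]

theorem Finset.exists_subset_sum_two_pow_eq {ι : Type*} (s : Finset ι) (w : ι → ℕ) {N : ℕ}
    (hdvd : ∀ x ∈ s, 2 ^ w x ∣ N) (hN : N ≤ ∑ x ∈ s, 2 ^ w x) :
    ∃ t ⊆ s, ∑ x ∈ t, 2 ^ w x = N := by
  classical
  induction s using Finset.induction_on_max_value w generalizing N with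
  | empty => exact ⟨∅, subset_rfl, by simp_all⟩
  | insert a s has hmax ih =>
    rw [sum_insert has] at hN
    by_cases hNs : N ≤ ∑ x ∈ s, 2 ^ w x
    · obtain ⟨t, hts, ht⟩ := ih (fun x hx => hdvd x (mem_insert_of_mem hx)) hNs
      exact ⟨t, hts.trans (subset_insert a s), ht⟩
    · have haN : 2 ^ w a ≤ N := Nat.le_of_dvd (by omega) (hdvd a (mem_insert_self a s))
      obtain ⟨t, hts, ht⟩ := ih (N := N - 2 ^ w a) (fun x hx => Nat.dvd_sub
        (hdvd x (mem_insert_of_mem hx)) (Nat.pow_dvd_pow 2 (hmax x hx))) (by omega)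
      refine ⟨insert a t, insert_subset_insert a hts, ?_⟩
      rw [sum_insert fun hat => has (hts hat), ht]
      omega

section MaskSums

variable (ι : Type*) [Fintype ι]

def maskSums (F : Set ℕ) : Set ℕ :=
  {s | ∃ B : ι → Finset ℕ, (∀ i, ↑(B i) ⊆ F) ∧ ∑ i, ∑ b ∈ B i, 2 ^ b = s}

variable {ι}

theorem maskSums_inter_Iic_eq {F G : Set ℕ} {n : ℕ} (hGF : G ⊆ F)
    (hFG : ∀ b ∈ F, 2 ^ b ≤ n → b ∈ G) :
    maskSums ι F ∩ Set.Iic n = maskSums ι G ∩ Set.Iic n := by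
  refine subset_antisymm (fun s ⟨⟨B, hBF, hBs⟩, hsn⟩ =>
      ⟨⟨B, fun i b hb => hFG b (hBF i hb) ?_, hBs⟩, hsn⟩)
    fun s ⟨⟨B, hBG, hBs⟩, hsn⟩ => ⟨⟨B, fun i => (hBG i).trans hGF, hBs⟩, hsn⟩
  calc 2 ^ b ≤ ∑ c ∈ B i, 2 ^ c := single_le_sum (fun _ _ => Nat.zero_le _) hb
    _ ≤ ∑ i, ∑ c ∈ B i, 2 ^ c :=
        single_le_sum (f := fun i => ∑ c ∈ B i, 2 ^ c) (fun _ _ => Nat.zero_le _) (mem_univ i)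
    _ ≤ n := hBs ▸ hsn

variable {G : Finset ℕ}

theorem le_of_mem_maskSums {s : ℕ} (hs : s ∈ maskSums ι G) :
    s ≤ Fintype.card ι * ∑ b ∈ G, 2 ^ b := by
  obtain ⟨B, hBG, rfl⟩ := hs
  calc ∑ i, ∑ b ∈ B i, 2 ^ b ≤ ∑ _i : ι, ∑ b ∈ G, 2 ^ b :=
        sum_le_sum fun i _ => sum_le_sum_of_subset (coe_subset.1 (hBG i))
    _ = _ := by simp

theorem card_mul_mem_maskSums : Fintype.card ι * ∑ b ∈ G, 2 ^ b ∈ maskSums ι G :=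
  ⟨fun _ => G, fun _ => subset_rfl, by simp⟩

theorem sub_mem_maskSums {s : ℕ} (hs : s ∈ maskSums ι G) :
    Fintype.card ι * ∑ b ∈ G, 2 ^ b - s ∈ maskSums ι G := by
  obtain ⟨B, hBG, rfl⟩ := hs
  refine ⟨fun i => G \ B i, fun i => by simp, ?_⟩
  rw [eq_tsub_iff_add_eq_of_le (le_of_mem_maskSums ⟨B, hBG, rfl⟩), ← sum_add_distrib]
  simp [sum_sdiff (coe_subset.1 (hBG _))]

theorem sub_two_pow_mem_maskSums {F : Set ℕ} {e s : ℕ} (hF : ∀ b ∈ F, b < e)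
    (hs : s ∈ maskSums ι F) (hes : 2 ^ e ≤ s) : s - 2 ^ e ∈ maskSums ι F := by
  classical
  obtain ⟨B, hBF, rfl⟩ := hs
  -- the digits of all the `B i` together form one pool of powers of two below `2 ^ e`
  have hsigma : ∀ C : ι → Finset ℕ,
      ∑ i, ∑ b ∈ C i, 2 ^ b = ∑ x ∈ univ.sigma C, 2 ^ x.2 :=
    fun C => (sum_sigma univ C fun x => 2 ^ x.2).symm
  rw [hsigma] at hes ⊢
  obtain ⟨t, hts, ht⟩ := exists_subset_sum_two_pow_eq (univ.sigma B) Sigma.snd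
    (fun x hx => Nat.pow_dvd_pow 2 (hF _ (hBF _ (mem_sigma.1 hx).2)).le) hes
  refine ⟨fun i => (B i).filter fun b => ⟨i, b⟩ ∉ t,
    fun i => (coe_subset.2 (filter_subset _ _)).trans (hBF i), ?_⟩
  have hrest : (univ.sigma fun i => (B i).filter fun b => ⟨i, b⟩ ∉ t) = univ.sigma B \ t := by
    ext ⟨i, b⟩
    simp
  rw [hsigma, hrest, ← ht, ← sum_sdiff hts, add_tsub_cancel_right]

end MaskSums

theorem Nat.isGreatest_sSup_inter_Iic {S : Set ℕ} (h0 : 0 ∈ S) (x : ℕ) :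
    IsGreatest (S ∩ Set.Iic x) (sSup (S ∩ Set.Iic x)) :=
  have hbdd : BddAbove (S ∩ Set.Iic x) := ⟨x, fun _ hs => hs.2⟩
  ⟨Nat.sSup_mem ⟨0, h0, Nat.zero_le x⟩ hbdd, fun _ hs => le_csSup hbdd hs⟩

theorem Nat.sSup_inter_Iic_add {S : Set ℕ} {T c : ℕ} (hT : T ∈ S) (hle : ∀ s ∈ S, s ≤ T)
    (hcompl : ∀ s ∈ S, T - s ∈ S) (hsub : ∀ s ∈ S, c ≤ s → s - c ∈ S) (d : ℕ) :
    sSup (S ∩ Set.Iic (c + d)) = min (c + sSup (S ∩ Set.Iic d)) T := by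
  have h0 : 0 ∈ S := by simpa using hcompl T hT
  obtain ⟨⟨hDS, hDd⟩, hDmax⟩ := isGreatest_sSup_inter_Iic h0 d
  set D := sSup (S ∩ Set.Iic d)
  refine IsGreatest.csSup_eq ⟨⟨?_, ?_⟩, fun s ⟨hsS, hs⟩ => le_min ?_ (hle s hsS)⟩
  · rcases le_total T (c + D) with hTD | hTD
    · rwa [min_eq_right hTD]
    · rw [min_eq_left hTD]
      have := hcompl _ (hsub _ (hcompl D hDS) (by omega))
      rwa [show T - (T - D - c) = c + D by omega] at this
  · simp only [Set.mem_Iic] at hDd ⊢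
    omega
  · by_cases hcs : c ≤ s
    · have := hDmax ⟨hsub s hsS hcs, show s - c ≤ d by simp only [Set.mem_Iic] at hs; omega⟩
      omega
    · omega

noncomputable def maxMaskSum (ι : Type*) [Fintype ι] (n : ℕ) : ℕ :=
  sSup (maskSums ι (↑(bitSet n))ᶜ ∩ Set.Iic n)

theorem isGreatest_maxMaskSum (ι : Type*) [Fintype ι] (n : ℕ) :
    IsGreatest (maskSums ι (↑(bitSet n))ᶜ ∩ Set.Iic n) (maxMaskSum ι n) :=
  Nat.isGreatest_sSup_inter_Iic (⟨fun _ => ∅, fun _ => by simp, by simp⟩ : 0 ∈ maskSums ι _) n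

theorem maxMaskSum_two_pow_add (ι : Type*) [Fintype ι] {e d : ℕ} (hd : d < 2 ^ e) :
    maxMaskSum ι (2 ^ e + d) =
      min (2 ^ e + maxMaskSum ι d) (Fintype.card ι * (2 ^ e - 1 - d)) := by
  have hdbits : bitSet d ⊆ range e := bitSet_subset_range_iff.2 hd
  have he : e ∉ bitSet d := fun he => by simpa using hdbits he
  have hnbits : bitSet (2 ^ e + d) = insert e (bitSet d) := by
    rw [bitSet_add (by rwa [bitSet_two_pow, disjoint_singleton_left]), bitSet_two_pow, insert_eq]
  have hG : ∑ b ∈ range e \ bitSet d, 2 ^ b = 2 ^ e - 1 - d := by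
    have := sum_sdiff hdbits (f := fun b => 2 ^ b)
    rw [sum_bitSet, Nat.geomSum_eq le_rfl, show 2 - 1 = 1 from rfl, Nat.div_one] at this
    omega
  have hlt : ∀ {b m c : ℕ}, 2 ^ b ≤ m → m < 2 ^ c → b < c := fun h hm =>
    (Nat.pow_lt_pow_iff_right one_lt_two).1 (h.trans_lt hm)
  have hupper : maskSums ι (↑(bitSet (2 ^ e + d)))ᶜ ∩ Set.Iic (2 ^ e + d) =
      maskSums ι ↑(range e \ bitSet d) ∩ Set.Iic (2 ^ e + d) := by
    refine maskSums_inter_Iic_eq (fun b hb => ?_) fun b hb hbn => ?_ <;>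
      simp only [hnbits, coe_sdiff, coe_range, coe_insert, Set.mem_compl_iff, Set.mem_insert_iff,
        Set.mem_sdiff, Set.mem_Iio, mem_coe, not_or] at hb ⊢
    · exact ⟨hb.1.ne, hb.2⟩
    · exact ⟨lt_of_le_of_ne (Nat.lt_succ_iff.1 (hlt hbn (by rw [pow_succ]; omega))) hb.1, hb.2⟩
  have hlower : maskSums ι (↑(bitSet d))ᶜ ∩ Set.Iic d =
      maskSums ι ↑(range e \ bitSet d) ∩ Set.Iic d := by
    refine maskSums_inter_Iic_eq (fun b hb => ?_) fun b hb hbd => ?_ <;>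
      simp only [coe_sdiff, coe_range, Set.mem_compl_iff, Set.mem_sdiff, Set.mem_Iio,
        mem_coe] at hb ⊢
    · exact hb.2
    · exact ⟨hlt hbd hd, hb⟩
  rw [maxMaskSum, maxMaskSum, hupper, hlower,
    Nat.sSup_inter_Iic_add card_mul_mem_maskSums (fun _ => le_of_mem_maskSums)
      (fun _ => sub_mem_maskSums) (fun _ => sub_two_pow_mem_maskSums (by simp +contextual)), hG]

namespace MvPolynomial

variable {σ R : Type*} [CommSemiring R]

theorem mem_span_range_X_pow_iff {p : MvPolynomial σ R} {n : ℕ} :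
    p ∈ Ideal.span (Set.range fun i => (X i : MvPolynomial σ R) ^ (n + 1)) ↔
      ∀ μ ∈ p.support, ∃ i, n < μ i := by
  have hrange : (Set.range fun i => (X i : MvPolynomial σ R) ^ (n + 1)) =
      (fun s => monomial s (1 : R)) '' Set.range fun i => Finsupp.single i (n + 1) := by
    rw [← Set.range_comp]
    exact congrArg Set.range (_root_.funext fun i => X_pow_eq_monomial)
  rw [hrange, mem_ideal_span_monomial_image]
  simp only [Set.exists_range_iff, Finsupp.single_le_iff, Nat.lt_iff_add_one_le]

variable {K : ℕ}

noncomputable def binomialExponent (a j : Fin K → ℕ) : Fin (K + 1) →₀ ℕ :=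
  Finsupp.equivFunOnFinite.symm (Fin.snoc j (∑ i, (a i - j i)))

theorem binomialExponent_injective (a : Fin K → ℕ) : Function.Injective (binomialExponent a) :=
  fun j j' h => _root_.funext fun i => by
    simpa [binomialExponent] using DFunLike.congr_fun h i.castSucc

theorem prod_X_add_X_pow (a : Fin K → ℕ) :
    ∏ i, (X i.castSucc + X (Fin.last K) : MvPolynomial (Fin (K + 1)) R) ^ a i =
      ∑ j ∈ Fintype.piFinset fun i => range (a i + 1),
        monomial (binomialExponent a j) (∏ i, ((a i).choose (j i) : R)) := by
  simp_rw [add_pow, prod_univ_sum]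
  refine sum_congr rfl fun j _ => ?_
  have hfactor : ∀ i, (X i.castSucc : MvPolynomial (Fin (K + 1)) R) ^ j i *
      X (Fin.last K) ^ (a i - j i) * ((a i).choose (j i) : MvPolynomial (Fin (K + 1)) R) =
      monomial (Finsupp.single i.castSucc (j i) + Finsupp.single (Fin.last K) (a i - j i))
        ((a i).choose (j i) : R) := fun i => by
    rw [X_pow_eq_monomial, X_pow_eq_monomial, monomial_mul, ← map_natCast C, mul_comm,
      C_mul_monomial, one_mul, mul_one]
  rw [prod_congr rfl fun i _ => hfactor i, ← monomial_sum_prod]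
  congr 2
  ext x
  induction x using Fin.lastCases <;>
    simp [binomialExponent, Finsupp.single_apply]

theorem mem_support_prod_X_add_X_pow_iff (a : Fin K → ℕ) (μ : Fin (K + 1) →₀ ℕ) :
    μ ∈ (∏ i, (X i.castSucc + X (Fin.last K) : MvPolynomial (Fin (K + 1)) R) ^ a i).support ↔
      ∃ j : Fin K → ℕ, (∀ i, j i ≤ a i) ∧ ∏ i, ((a i).choose (j i) : R) ≠ 0 ∧
        binomialExponent a j = μ := by
  have hcoeff : ∀ j, coeff (binomialExponent a j)
      (∏ i, (X i.castSucc + X (Fin.last K) : MvPolynomial (Fin (K + 1)) R) ^ a i) =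
        if ∀ i, j i ≤ a i then ∏ i, ((a i).choose (j i) : R) else 0 := fun j => by
    simp_rw [prod_X_add_X_pow, coeff_sum, coeff_monomial, (binomialExponent_injective a).eq_iff,
      sum_ite_eq', Fintype.mem_piFinset, mem_range, Nat.lt_succ_iff]
  constructor
  · intro hμ
    obtain ⟨j, -, hj⟩ : ∃ j, _ ∧ μ ∈ (monomial (binomialExponent a j) _).support := by
      rw [prod_X_add_X_pow] at hμ
      simpa using support_sum hμ
    obtain rfl := mem_singleton.1 (support_monomial_subset hj)
    rw [mem_support_iff, hcoeff] at hμ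
    by_cases hja : ∀ i, j i ≤ a i
    · exact ⟨j, hja, by rwa [if_pos hja] at hμ, rfl⟩
    · exact absurd (if_neg hja) hμ
  · rintro ⟨j, hja, hj, rfl⟩
    rw [mem_support_iff, hcoeff, if_pos hja]
    exact hj

end MvPolynomial

open MvPolynomial in
theorem prod_X_add_X_pow_notMem_iff {K : ℕ} (a : Fin K → ℕ) (n : ℕ) :
    (∏ i, (X i.castSucc + X (Fin.last K) : MvPolynomial (Fin (K + 1)) (ZMod 2)) ^ a i) ∉
        Ideal.span (Set.range fun i => X i ^ (n + 1)) ↔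
      ∃ j r : Fin K → ℕ, a = j + r ∧ (∀ i, j i ≤ n ∧ Disjoint (bitSet (j i)) (bitSet (r i))) ∧
        ∑ i, r i ≤ n := by
  simp only [mem_span_range_X_pow_iff, mem_support_prod_X_add_X_pow_iff, not_forall, not_exists,
    not_lt, exists_prop]
  constructor
  · rintro ⟨_, ⟨j, hja, hodd, rfl⟩, hn⟩
    refine ⟨j, a - j, by ext i; simp [hja i], fun i => ⟨?_, ?_⟩, ?_⟩
    · simpa [binomialExponent] using hn i.castSucc
    · rw [← odd_choose_add_iff, Pi.sub_apply, Nat.add_sub_cancel' (hja i),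
        ← ZMod.natCast_ne_zero_iff_odd]
      exact (prod_ne_zero_iff.1 hodd) i (mem_univ i)
    · simpa [binomialExponent] using hn (Fin.last K)
  · rintro ⟨j, r, rfl, hjr, hr⟩
    refine ⟨_, ⟨j, fun i => Nat.le_add_right _ _, prod_ne_zero_iff.2 fun i _ => ?_, rfl⟩,
      fun i => ?_⟩
    · rw [ZMod.natCast_ne_zero_iff_odd]
      exact (odd_choose_add_iff _ _).2 (hjr i).2
    · induction i using Fin.lastCases <;> simp [binomialExponent, hr, hjr]

theorem isGreatest_sum_add_maxMaskSum (ι : Type*) [Fintype ι] (n : ℕ) :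
    IsGreatest {s | ∃ j r : ι → ℕ, (∀ i, j i ≤ n ∧ Disjoint (bitSet (j i)) (bitSet (r i))) ∧
        ∑ i, r i ≤ n ∧ ∑ i, (j i + r i) = s}
      (Fintype.card ι * n + maxMaskSum ι n) := by
  obtain ⟨⟨⟨B, hBn, hBsum⟩, hBle⟩, hmax⟩ := isGreatest_maxMaskSum ι n
  constructor
  · refine ⟨fun _ => n, fun i => ∑ b ∈ B i, 2 ^ b, fun i => ⟨le_rfl, ?_⟩, hBsum ▸ hBle, ?_⟩
    · simpa [Set.subset_compl_iff_disjoint_right, disjoint_comm] using hBn i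
    · simp [sum_add_distrib, hBsum]
  · rintro _ ⟨j, r, hjr, hr, rfl⟩
    choose t htr htn hjt using fun i => exists_le_disjoint_bitSet_add_le (hjr i).2 (hjr i).1
    have ht : ∑ i, t i ≤ maxMaskSum ι n :=
      hmax ⟨⟨fun i => bitSet (t i),
        fun i => by simpa [Set.subset_compl_iff_disjoint_right] using htn i, by simp⟩,
        (sum_le_sum fun i _ => htr i).trans hr⟩
    calc ∑ i, (j i + r i) ≤ ∑ i, (n + t i) := sum_le_sum fun i _ => hjt i
      _ ≤ _ := by simp [sum_add_distrib, ht]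

theorem zcl_eq (k n : ℕ) : zcl k n = (k - 1) * n + maxMaskSum (Fin (k - 1)) n := by
  nth_rw 1 [← Fintype.card_fin (k - 1)]
  rw [← (isGreatest_sum_add_maxMaskSum (Fin (k - 1)) n).csSup_eq, zcl]
  congr 1
  ext s
  simp only [Set.mem_ofPred_eq, ne_eq, Ideal.Quotient.eq_zero_iff_mem,
    prod_X_add_X_pow_notMem_iff]
  constructor
  · rintro ⟨_, rfl, j, r, rfl, hjr, hr⟩
    exact ⟨j, r, hjr, hr, rfl⟩
  · rintro ⟨j, r, hjr, hr, rfl⟩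
    exact ⟨j + r, rfl, j, r, rfl, hjr, hr⟩

/-- If `n = 2^e + d` with `0 ≤ d < 2^e` and `k ≥ 2`, then
`h_k(n) = min(h_k(d) + 2^e, (k-1)(2^(e+1) - 1 - n))`. -/
theorem h_recursion (e d k : ℕ) (hd : d < 2 ^ e) (hk : 2 ≤ k) :
    h k (2 ^ e + d) =
      min (h k d + 2 ^ e) (((k : ℤ) - 1) * (2 ^ (e + 1) - 1 - (2 ^ e + d))) := by
  have h_eq : ∀ n, h k n = maxMaskSum (Fin (k - 1)) n := fun n => by
    rw [h, zcl_eq, Nat.cast_add, Nat.cast_mul, Nat.cast_sub (by omega : 1 ≤ k)]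
    ring
  rw [h_eq, h_eq, maxMaskSum_two_pow_add _ hd, Fintype.card_fin, Nat.cast_min, add_comm]
  congr 1
  rw [Nat.cast_mul, Nat.cast_sub (by omega : 1 ≤ k), Nat.cast_sub (by omega : d ≤ 2 ^ e - 1),
    Nat.cast_sub Nat.one_le_two_pow]
  push_cast
  ring
end

section
/- Let n = 2^e + d with 0 ≤ d < 2^e, and let j ≥ 1. Then m_j(n) = min(m_j(d) + 2^e, j·(2^{e+1} − 1 − n)). -/
/-!
The elements of `Z(2^e + d)` are the powers `2^i`, `i < e`, at the zero bits of `d`; their sum is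
`2^e - 1 - d`, and those that are `≤ d` form exactly `Z(d)`. A multiset of powers `p^k`, `k ≤ e`,
with sum at least `p^e` contains a sub-multiset with sum exactly `p^e` (either `p^e` itself
occurs, or by induction one extracts `p` disjoint blocks of sum `p^(e-1)`). So an admissible
choice of sum `≥ 2^e` splits into a block of sum `2^e` and a rest of sum `≤ d`, all of whose
elements lie in `Z(d)`; conversely an optimal choice for `d` is completed by such a block,
unless the whole multiset already has sum `≤ 2^e + d`.
-/

/-- `Zms m` is the set of powers of 2 corresponding to the 0 digits in the binary
expansion of `m` (as a multiset; `Zms 0` is empty). -/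
def Zms (m : ℕ) : Multiset ℕ :=
  if m = 0 then 0
  else ((Finset.range (Nat.log 2 m + 1)).filter fun j => ¬m.testBit j).val.map (2 ^ ·)

/-- `phi S n` is the maximal sum of a sub-multiset `T` of `S` subject to `T.sum ≤ n`. -/
noncomputable def phi (S : Multiset ℕ) (n : ℕ) : ℕ :=
  sSup {t : ℕ | ∃ T ≤ S, T.sum = t ∧ t ≤ n}

/-- `mfun j n = phi(Z(n)^j, n)` where `Z(n)^j` is the multiset union of `j` copies of `Z(n)`. -/
noncomputable def mfun (j n : ℕ) : ℕ := phi (j • Zms n) n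

namespace Multiset

theorem sum_tsub_add_sum {T U : Multiset ℕ} (h : U ≤ T) : (T - U).sum + U.sum = T.sum := by
  rw [← sum_add, tsub_add_cancel_of_le h]

theorem exists_le_sum_eq_nsmul {S : Multiset ℕ} {s : ℕ}
    (h : ∀ T ≤ S, s ≤ T.sum → ∃ U ≤ T, U.sum = s) (k : ℕ) (hk : k * s ≤ S.sum) :
    ∃ U ≤ S, U.sum = k * s := by
  induction k generalizing S with
  | zero => exact ⟨0, zero_le _, by simp⟩
  | succ k ih =>
    obtain ⟨U, hUS, hU⟩ := h S le_rfl (by nlinarith)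
    have hrest := sum_tsub_add_sum hUS
    obtain ⟨V, hVS, hV⟩ := ih (S := S - U)
      (fun T hT => h T (hT.trans tsub_le_self)) (by rw [Nat.succ_mul] at hk; omega)
    exact ⟨U + V, (le_tsub_iff_left hUS).mp hVS, by rw [sum_add, hU, hV]; ring⟩

theorem exists_le_sum_eq_pow {p E : ℕ} {S : Multiset ℕ} (hS : ∀ x ∈ S, ∃ k ≤ E, x = p ^ k)
    (hsum : p ^ E ≤ S.sum) : ∃ U ≤ S, U.sum = p ^ E := by
  induction E generalizing S with
  | zero =>
    have hS0 : S ≠ 0 := by rintro rfl; simp at hsum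
    obtain ⟨x, hx⟩ := exists_mem_of_ne_zero hS0
    obtain ⟨k, hk, rfl⟩ := hS x hx
    exact ⟨{p ^ k}, singleton_le.mpr hx, by simp [Nat.le_zero.mp hk]⟩
  | succ E ih =>
    by_cases hmem : p ^ (E + 1) ∈ S
    · exact ⟨{p ^ (E + 1)}, singleton_le.mpr hmem, sum_singleton _⟩
    have hS' : ∀ x ∈ S, ∃ k ≤ E, x = p ^ k := by
      intro x hx
      obtain ⟨k, hk, rfl⟩ := hS x hx
      exact ⟨k, Nat.le_of_lt_succ (lt_of_le_of_ne hk (by rintro rfl; exact hmem hx)), rfl⟩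
    rw [pow_succ'] at hsum ⊢
    exact exists_le_sum_eq_nsmul (fun T hT => ih fun x hx => hS' x (mem_of_le hT hx)) p hsum

end Multiset

section phi

theorem exists_le_sum_eq_phi (S : Multiset ℕ) (n : ℕ) :
    ∃ T ≤ S, T.sum = phi S n ∧ phi S n ≤ n :=
  Nat.sSup_mem (s := {t | ∃ T ≤ S, T.sum = t ∧ t ≤ n})
    ⟨0, 0, Multiset.zero_le _, rfl, Nat.zero_le n⟩ ⟨n, fun _ ⟨_, _, _, h⟩ => h⟩

variable {S : Multiset ℕ} {n : ℕ}

theorem le_phi {T : Multiset ℕ} (hT : T ≤ S) (hn : T.sum ≤ n) : T.sum ≤ phi S n :=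
  le_csSup ⟨n, fun _ ⟨_, _, _, h⟩ => h⟩ ⟨T, hT, rfl, hn⟩

theorem phi_le {x : ℕ} (h : ∀ T ≤ S, T.sum ≤ n → T.sum ≤ x) : phi S n ≤ x := by
  obtain ⟨T, hT, hsum, hn⟩ := exists_le_sum_eq_phi S n
  rw [← hsum] at hn ⊢
  exact h T hT hn

theorem phi_pow_add_le {p e : ℕ} (hS : ∀ x ∈ S, ∃ k ≤ e, x = p ^ k) (d : ℕ) :
    phi S (p ^ e + d) ≤ phi (S.filter (· ≤ d)) d + p ^ e := by
  refine phi_le fun T hT hTn => ?_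
  rcases lt_or_ge T.sum (p ^ e) with hsmall | hbig
  · omega
  obtain ⟨U, hUT, hU⟩ :=
    Multiset.exists_le_sum_eq_pow (fun x hx => hS x (Multiset.mem_of_le hT hx)) hbig
  have hrest := Multiset.sum_tsub_add_sum hUT
  have hRd : (T - U).sum ≤ d := by omega
  have hRS : T - U ≤ S.filter (· ≤ d) := by
    rw [← Multiset.filter_eq_self.mpr fun x hx => (Multiset.le_sum_of_mem hx).trans hRd]
    exact Multiset.filter_le_filter _ (tsub_le_self.trans hT)
  have := le_phi hRS hRd
  omega

theorem le_phi_pow_add {p e : ℕ} (hS : ∀ x ∈ S, ∃ k ≤ e, x = p ^ k) (d : ℕ) :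
    min (phi (S.filter (· ≤ d)) d + p ^ e) S.sum ≤ phi S (p ^ e + d) := by
  obtain ⟨V, hV, hVsum, hVd⟩ := exists_le_sum_eq_phi (S.filter (· ≤ d)) d
  have hVS : V ≤ S := hV.trans (Multiset.filter_le _ _)
  have hrest := Multiset.sum_tsub_add_sum hVS
  rcases le_or_gt S.sum (phi (S.filter (· ≤ d)) d + p ^ e) with hall | hpart
  · exact (min_le_right _ _).trans (le_phi le_rfl (by omega))
  obtain ⟨U, hU, hUsum⟩ := Multiset.exists_le_sum_eq_pow
    (fun x hx => hS x (Multiset.mem_of_le tsub_le_self hx)) (show p ^ e ≤ (S - V).sum by omega)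
  have hVU : (V + U).sum = phi (S.filter (· ≤ d)) d + p ^ e := by
    rw [Multiset.sum_add, hVsum, hUsum]
  exact (min_le_left _ _).trans
    (hVU ▸ le_phi ((le_tsub_iff_left hVS).mp hU) (by omega))

theorem phi_pow_add {p e : ℕ} (hS : ∀ x ∈ S, ∃ k ≤ e, x = p ^ k) (d : ℕ) :
    phi S (p ^ e + d) = min (phi (S.filter (· ≤ d)) d + p ^ e) S.sum :=
  le_antisymm (le_min (phi_pow_add_le hS d) (phi_le fun T hT _ => by
    have := Multiset.sum_tsub_add_sum hT; omega)) (le_phi_pow_add hS d)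

end phi

section Zms

variable {e d : ℕ}

theorem Zms_two_pow_add (hd : d < 2 ^ e) :
    Zms (2 ^ e + d) = ((Finset.range e).filter fun i => ¬d.testBit i).val.map (2 ^ ·) := by
  have hlog : Nat.log 2 (2 ^ e + d) = e :=
    Nat.log_eq_of_pow_le_of_lt_pow (by omega) (by rw [pow_succ]; omega)
  rw [Zms, if_neg (by positivity), hlog]
  congr 2
  ext i
  simp only [Finset.mem_filter, Finset.mem_range]
  rcases lt_trichotomy i e with hi | rfl | hi
  · simp [hi, Nat.testBit_two_pow_add_gt hi, Nat.lt_succ_of_lt hi]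
  · simp [Nat.testBit_two_pow_add_eq, Nat.testBit_lt_two_pow hd]
  · simp [hi.not_gt, (Nat.succ_le_of_lt hi).not_gt]

theorem exists_eq_two_pow_of_mem_Zms_two_pow_add (hd : d < 2 ^ e) {x : ℕ}
    (hx : x ∈ Zms (2 ^ e + d)) : ∃ k ≤ e, x = 2 ^ k := by
  rw [Zms_two_pow_add hd] at hx
  obtain ⟨k, hk, rfl⟩ := Multiset.mem_map.mp hx
  exact ⟨k, (Finset.mem_range.mp (Finset.mem_filter.mp hk).1).le, rfl⟩

theorem sum_Zms_two_pow_add (hd : d < 2 ^ e) : (Zms (2 ^ e + d)).sum = 2 ^ e - 1 - d := by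
  have hbits : (Finset.range e).filter (fun i => ¬d.testBit i) =
      (2 ^ e - (d + 1)).bitIndices.toFinset := by
    ext i
    simp [Nat.testBit_two_pow_sub_succ hd]
  rw [Zms_two_pow_add hd, Finset.sum_map_val, hbits, Finset.sum_toFinset_bitIndices_two_pow]
  omega

theorem filter_Zms_two_pow_add (hd : d < 2 ^ e) :
    (Zms (2 ^ e + d)).filter (· ≤ d) = Zms d := by
  rw [Zms_two_pow_add hd, Multiset.filter_map, ← Finset.filter_val, Zms]
  split_ifs with hd0
  · simp [hd0]
  congr 2
  ext i
  simp only [Finset.mem_filter, Finset.mem_range, Function.comp_apply,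
    ← Nat.le_log_iff_pow_le one_lt_two hd0]
  have := Nat.log_lt_of_lt_pow hd0 hd
  exact ⟨fun h => ⟨by omega, h.1.2⟩, fun h => ⟨⟨by omega, h.2⟩, by omega⟩⟩

end Zms

theorem mfun_recursion_general (e d j : ℕ) (hd : d < 2 ^ e) :
    mfun j (2 ^ e + d) =
      min (mfun j d + 2 ^ e) (j * (2 ^ (e + 1) - 1 - (2 ^ e + d))) := by
  have hS : ∀ x ∈ j • Zms (2 ^ e + d), ∃ k ≤ e, x = 2 ^ k := fun x hx =>
    exists_eq_two_pow_of_mem_Zms_two_pow_add hd (Multiset.mem_of_mem_nsmul hx)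
  rw [mfun, mfun, phi_pow_add hS, Multiset.filter_nsmul, filter_Zms_two_pow_add hd,
    Multiset.sum_nsmul, sum_Zms_two_pow_add hd, smul_eq_mul, pow_succ]
  congr 2
  omega

/-- If `n = 2^e + d` with `0 ≤ d < 2^e` and `j ≥ 1`, then
`m_j(n) = min(m_j(d) + 2^e, j*(2^(e+1) - 1 - n))`. -/
theorem mfun_recursion (e d j : ℕ) (hd : d < 2 ^ e) (hj : 1 ≤ j) :
    mfun j (2 ^ e + d) =
      min (mfun j d + 2 ^ e) (j * (2 ^ (e + 1) - 1 - (2 ^ e + d))) :=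
  mfun_recursion_general e d j hd
end

section
/- For all n ≥ 0 and k ≥ 2, h̃_k(n) = m_{k−1}(n); that is, the maximum of Σ_{i=1}^{k−1} b_i over tuples of nonnegative integers (b_1, …, b_{k−1}) with Σ b_i ≤ n and every binomial coefficient C(n + b_i, n) odd equals φ(Z(n)^{k−1}, n). -/
/-- `htilde k n` is the maximum of the sum of `b_1, ..., b_(k-1)` over tuples of naturals
with sum at most `n` and every binomial coefficient `C(n + b_i, n)` odd. -/
noncomputable def htilde (k n : ℕ) : ℕ :=
  sSup {s : ℕ | ∃ b : Fin (k - 1) → ℕ, s = ∑ i, b i ∧ s ≤ n ∧ ∀ i, Odd ((n + b i).choose n)}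

/-!
By Lucas' theorem (equivalently Kummer's carry count), `C(n + b, n)` is odd exactly when adding
`n` and `b` in binary produces no carry, i.e. when the binary digits of `b` sit on the zero
digits of `n`. For `b ≤ n` these are precisely the sums of sub-multisets of `Z(n)`, so an
admissible tuple `(b₁, …, b_{k-1})` is the same thing as a choice of `k - 1` sub-multisets of
`Z(n)`, whose multiset sum is an arbitrary sub-multiset of `Z(n)^{k-1}`.
-/

namespace Nat

theorem odd_add_choose_iff_land_eq_zero (n b : ℕ) : Odd ((n + b).choose n) ↔ n &&& b = 0 := by
  induction n using Nat.binaryRec generalizing b with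
  | zero => simp
  | bit a n ih =>
    obtain ⟨c, b, rfl⟩ : ∃ c b', b = bit c b' := ⟨_, _, (bit_bodd_div2 b).symm⟩
    have hmod : (bit a n + bit c b) % 2 = (a ^^ c).toNat := by
      cases a <;> cases c <;> simp [bit_val, add_mod]
    have hdiv : (bit a n + bit c b) / 2 = n + b + (a && c).toNat := by
      cases a <;> cases c <;> simp [bit_val] <;> omega
    rw [odd_iff, Choose.choose_modEq_choose_mod_mul_choose_div_nat (p := 2), hmod, hdiv,
      bit_mod_two, bit_div_two, land_bit, bit_eq_zero_iff, ← ih, odd_iff]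
    cases a <;> cases c <;> simp

theorem land_eq_zero_iff_testBit {m n : ℕ} : m &&& n = 0 ↔ ∀ i, n.testBit i → ¬m.testBit i := by
  refine ⟨fun h i hn hm => by simpa [hm, hn] using congrArg (testBit · i) h, fun h => ?_⟩
  refine zero_of_testBit_eq_false fun i => ?_
  cases hn : n.testBit i <;> simp_all

theorem exists_subset_sum_two_pow_eq_iff {Z : Finset ℕ} {b : ℕ} :
    (∃ J ⊆ Z, ∑ j ∈ J, 2 ^ j = b) ↔ ∀ i, b.testBit i → i ∈ Z := by
  refine ⟨?_, fun h => ⟨b.bitIndices.toFinset, fun i hi => h i (by simpa using hi),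
    Finset.sum_toFinset_bitIndices_two_pow b⟩⟩
  rintro ⟨J, hJ, rfl⟩ i hi
  rw [← mem_bitIndices, ← List.mem_toFinset, Finset.toFinset_bitIndices_sum_two_pow] at hi
  exact hJ hi

end Nat

namespace Finset

theorem exists_le_map_val_sum_eq_iff {α β : Type*} [AddCommMonoid β] {s : Finset α} {f : α ↪ β}
    {b : β} : (∃ T ≤ (s.map f).val, T.sum = b) ↔ ∃ t ⊆ s, ∑ a ∈ t, f a = b := by
  constructor
  · rintro ⟨T, hT, rfl⟩
    have hT' : (⟨T, Multiset.nodup_of_le hT (s.map f).nodup⟩ : Finset β) ⊆ s.map f :=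
      val_le_iff.1 hT
    obtain ⟨t, ht, htT⟩ := subset_map_iff.1 hT'
    exact ⟨t, ht, by rw [show T = (t.map f).val from congrArg val htT, map_val]; rfl⟩
  · rintro ⟨t, ht, rfl⟩
    exact ⟨(t.map f).val, val_le_iff.2 (map_subset_map.2 ht), by rw [map_val]; rfl⟩

end Finset

namespace Multiset

theorem exists_fin_sum_eq_of_le_nsmul {α : Type*} [DecidableEq α] {S : Multiset α} :
    ∀ {m : ℕ} {T : Multiset α}, T ≤ m • S → ∃ f : Fin m → Multiset α, (∀ i, f i ≤ S) ∧ ∑ i, f i = T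
  | 0, T, hT => ⟨Fin.elim0, fun i => i.elim0, by simpa using (le_zero.1 (zero_nsmul S ▸ hT)).symm⟩
  | m + 1, T, hT => by
    rw [succ_nsmul'] at hT
    obtain ⟨f, hf, hfT⟩ := exists_fin_sum_eq_of_le_nsmul (tsub_le_iff_left.2 hT)
    refine ⟨Fin.cons (T ∩ S) f, Fin.cases inter_le_right hf, ?_⟩
    rw [Fin.sum_cons, hfT, add_comm, sub_add_inter]

theorem exists_le_nsmul_sum_eq_iff {α : Type*} [AddCommMonoid α] {S : Multiset α} {m : ℕ} {s : α} :
    (∃ T ≤ m • S, T.sum = s) ↔ ∃ b : Fin m → α, ∑ i, b i = s ∧ ∀ i, ∃ T ≤ S, T.sum = b i := by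
  classical
  constructor
  · rintro ⟨T, hT, rfl⟩
    obtain ⟨f, hf, rfl⟩ := exists_fin_sum_eq_of_le_nsmul hT
    exact ⟨fun i => (f i).sum, (map_sum sumAddMonoidHom f _).symm, fun i => ⟨f i, hf i, rfl⟩⟩
  · rintro ⟨b, rfl, hb⟩
    choose T hTS hTb using hb
    refine ⟨∑ i, T i, ?_,
      (map_sum sumAddMonoidHom T _).trans (Finset.sum_congr rfl fun i _ => hTb i)⟩
    simpa using Finset.sum_le_sum fun i (_ : i ∈ Finset.univ) => hTS i

end Multiset

theorem exists_le_Zms_sum_eq_iff {n b : ℕ} (hb : b ≤ n) :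
    (∃ T ≤ Zms n, T.sum = b) ↔ n &&& b = 0 := by
  rcases eq_or_ne n 0 with rfl | hn
  · obtain rfl : b = 0 := Nat.le_zero.1 hb
    simp [Zms]
  have hZ : Zms n = (((Finset.range (Nat.log 2 n + 1)).filter fun j => ¬n.testBit j).map
      ⟨(2 ^ ·), Nat.pow_right_injective le_rfl⟩).val := by
    rw [Zms, if_neg hn, Finset.map_val]
    rfl
  rw [hZ, Finset.exists_le_map_val_sum_eq_iff]
  simp only [Function.Embedding.coeFn_mk]
  rw [Nat.exists_subset_sum_two_pow_eq_iff, Nat.land_eq_zero_iff_testBit]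
  refine forall₂_congr fun i hi => ?_
  have hlog : i < Nat.log 2 n + 1 :=
    Nat.lt_succ_of_le (Nat.le_log_of_pow_le one_lt_two ((Nat.ge_two_pow_of_testBit hi).trans hb))
  simp [hlog]

theorem odd_add_choose_iff_exists_le_Zms {n b : ℕ} (hb : b ≤ n) :
    Odd ((n + b).choose n) ↔ ∃ T ≤ Zms n, T.sum = b := by
  rw [Nat.odd_add_choose_iff_land_eq_zero, exists_le_Zms_sum_eq_iff hb]

theorem htilde_eq_phi_general (n k : ℕ) :
    htilde k n = phi ((k - 1) • Zms n) n := by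
  unfold htilde phi
  congr 1
  ext s
  have le_of_sum_le {b : Fin (k - 1) → ℕ} (h : ∑ i, b i ≤ n) (i : Fin (k - 1)) : b i ≤ n :=
    (Finset.single_le_sum (fun j _ => Nat.zero_le (b j)) (Finset.mem_univ i)).trans h
  constructor
  · rintro ⟨b, rfl, hsn, hodd⟩
    obtain ⟨T, hT, hTs⟩ := Multiset.exists_le_nsmul_sum_eq_iff.2
      ⟨b, rfl, fun i => (odd_add_choose_iff_exists_le_Zms (le_of_sum_le hsn i)).1 (hodd i)⟩
    exact ⟨T, hT, hTs, hsn⟩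
  · rintro ⟨T, hT, rfl, hsn⟩
    obtain ⟨b, hb, hbT⟩ := Multiset.exists_le_nsmul_sum_eq_iff.1 ⟨T, hT, rfl⟩
    refine ⟨b, hb.symm, hsn, fun i => ?_⟩
    exact (odd_add_choose_iff_exists_le_Zms (le_of_sum_le (hb ▸ hsn) i)).2 (hbT i)

/-- The key equation: `htilde_k(n) = m_(k-1)(n) = phi(Z(n)^(k-1), n)`. -/
theorem htilde_eq_phi (n k : ℕ) (hk : 2 ≤ k) :
    htilde k n = phi ((k - 1) • Zms n) n :=
  htilde_eq_phi_general n k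
end

section
/- Let n = 2^e + d with 0 ≤ d < 2^e and let k ≥ 2. Then h̃_k(n) = min(h̃_k(d) + 2^e, (k−1)(2^{e+1} − 1 − n)), where h̃_k(0) = 0. -/
/-!
By Lucas' theorem, `C(n + b, n)` is odd iff the binary digits of `b` avoid those of `n`. For
`b ≤ 2^e + d`, and for `b ≤ d`, this says that the digits of `b` lie in the set `Z` of zero digits
of `d` below `e`. Hence `htilde k (2^e + d)` and `htilde k d` are the largest subset sums, below
the respective bounds, of the multiset made of `k - 1` copies of `2^j` for each `j ∈ Z`, whose
total is `(k - 1)(2^e - 1 - d)`. These subset sums are symmetric under `s ↦ total - s`, and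
each one that is at least `2^e` can be lowered by exactly `2^e`, because powers of two at most
`2^e` with sum at least `2^e` contain a subfamily with sum exactly `2^e`. These two facts give
the recursion.
-/

open Finset

namespace Nat

theorem forall_testBit_imp_not_iff (n b : ℕ) :
    (∀ j, n.testBit j → ¬b.testBit j) ↔
      ¬(n % 2 = 1 ∧ b % 2 = 1) ∧ ∀ j, (n / 2).testBit j → ¬(b / 2).testBit j := by
  constructor
  · intro h
    refine ⟨fun ⟨hn, hb⟩ => h 0 (by simp [testBit_zero, hn]) (by simp [testBit_zero, hb]),
      fun j => by simpa only [testBit_div_two] using h (j + 1)⟩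
  · rintro ⟨h0, h⟩ (_ | j)
    · simp only [testBit_zero, decide_eq_true_eq]
      exact fun hn hb => h0 ⟨hn, hb⟩
    · simpa only [testBit_div_two] using h j

theorem odd_choose_add_iff (n b : ℕ) :
    Odd ((n + b).choose n) ↔ ∀ j, n.testBit j → ¬b.testBit j := by
  induction n using Nat.strong_induction_on generalizing b with
  | _ n ih =>
  rcases n.eq_zero_or_pos with rfl | hn
  · simp
  have lucas := Choose.choose_modEq_choose_mod_mul_choose_div_nat (n := n + b) (k := n) (p := 2)
  rw [Nat.ModEq] at lucas
  rw [Nat.odd_iff, lucas, forall_testBit_imp_not_iff]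
  by_cases hc : n % 2 = 1 ∧ b % 2 = 1
  · have hnb : (n + b) % 2 = 0 := by omega
    simp [hnb, hc.1, hc.2]
  · have hdiv : (n + b) / 2 = n / 2 + b / 2 := by omega
    have hmod : ((n + b) % 2).choose (n % 2) = 1 := by
      rw [show (n + b) % 2 = n % 2 + b % 2 by omega]
      rcases (by omega : n % 2 = 0 ∨ b % 2 = 0) with h | h <;> simp [h]
    rw [hmod, one_mul, hdiv, ← Nat.odd_iff, ih (n / 2) (by omega)]
    exact (and_iff_right hc).symm

theorem odd_choose_add_iff_disjoint (n b : ℕ) :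
    Odd ((n + b).choose n) ↔ Disjoint n.bitIndices.toFinset b.bitIndices.toFinset := by
  rw [odd_choose_add_iff, Finset.disjoint_left]
  simp

theorem bitIndices_toFinset_subset_range {b N : ℕ} (h : b < 2 ^ N) :
    b.bitIndices.toFinset ⊆ range N := fun j hj => by
  rw [List.mem_toFinset] at hj
  exact mem_range.2 <| (Nat.pow_lt_pow_iff_right (by norm_num)).1
    ((two_pow_le_of_mem_bitIndices hj).trans_lt h)

theorem bitIndices_toFinset_two_pow_add {d e : ℕ} (hd : d < 2 ^ e) :
    (2 ^ e + d).bitIndices.toFinset = insert e d.bitIndices.toFinset := by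
  have he : e ∉ d.bitIndices.toFinset := fun h => by
    simpa using bitIndices_toFinset_subset_range hd h
  conv_lhs => rw [← sum_toFinset_bitIndices_two_pow d, ← sum_insert he]
  exact toFinset_bitIndices_sum_two_pow _

theorem disjoint_bitIndices_iff_subset_of_le {d e b : ℕ} (hd : d < 2 ^ e) (hb : b ≤ d) :
    Disjoint d.bitIndices.toFinset b.bitIndices.toFinset ↔
      b.bitIndices.toFinset ⊆ range e \ d.bitIndices.toFinset := by
  rw [subset_sdiff, disjoint_comm]
  exact (and_iff_right (bitIndices_toFinset_subset_range (hb.trans_lt hd))).symm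

theorem disjoint_bitIndices_two_pow_add_iff_subset_of_le {d e b : ℕ} (hd : d < 2 ^ e)
    (hb : b ≤ 2 ^ e + d) :
    Disjoint (2 ^ e + d).bitIndices.toFinset b.bitIndices.toFinset ↔
      b.bitIndices.toFinset ⊆ range e \ d.bitIndices.toFinset := by
  have hb' : b.bitIndices.toFinset ⊆ insert e (range e) := by
    rw [← range_add_one]
    exact bitIndices_toFinset_subset_range (by rw [pow_succ]; omega)
  rw [bitIndices_toFinset_two_pow_add hd, disjoint_insert_left, subset_sdiff, disjoint_comm]
  constructor
  · rintro ⟨he, hdisj⟩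
    exact ⟨(subset_insert_iff_of_notMem he).1 hb', hdisj⟩
  · rintro ⟨hrange, hdisj⟩
    exact ⟨fun he => by simpa using hrange he, hdisj⟩

theorem sum_range_sdiff_bitIndices {d e : ℕ} (hd : d < 2 ^ e) :
    ∑ j ∈ range e \ d.bitIndices.toFinset, 2 ^ j = 2 ^ e - 1 - d := by
  have hsplit := sum_sdiff (f := (2 ^ ·)) (bitIndices_toFinset_subset_range hd)
  rw [sum_toFinset_bitIndices_two_pow, Nat.geomSum_eq le_rfl] at hsplit
  simp only [Nat.add_one_sub_one, Nat.div_one] at hsplit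
  omega

end Nat

namespace Finset

variable {α : Type*}

/-- Greedy from the smallest weight: once the remaining weights fall short of `2 ^ e`, adding the
smallest one cannot overshoot, since every weight involved is a multiple of it. -/
theorem exists_subset_sum_two_pow_eq_s7 [DecidableEq α] (f : α → ℕ) {e : ℕ} (S : Finset α)
    (hf : ∀ x ∈ S, f x ≤ e) (hS : 2 ^ e ≤ ∑ x ∈ S, 2 ^ f x) :
    ∃ S' ⊆ S, ∑ x ∈ S', 2 ^ f x = 2 ^ e := by
  induction S using Finset.induction_on_min_value f with
  | empty => simp at hS
  | insert a S haS hmin ih =>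
    by_cases hbig : 2 ^ e ≤ ∑ x ∈ S, 2 ^ f x
    · obtain ⟨S', hS', hsum⟩ := ih (fun x hx => hf x (mem_insert_of_mem hx)) hbig
      exact ⟨S', hS'.trans (subset_insert a S), hsum⟩
    · refine ⟨insert a S, Subset.rfl, le_antisymm ?_ hS⟩
      rw [sum_insert haS]
      refine Nat.le_of_lt_add_of_dvd (by omega) ?_ (pow_dvd_pow 2 (hf a (mem_insert_self a S)))
      exact dvd_add dvd_rfl (dvd_sum fun x hx => pow_dvd_pow 2 (hmin x hx))

def subsetSums (U : Finset α) (w : α → ℕ) : Set ℕ :=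
  {s | ∃ S ⊆ U, ∑ x ∈ S, w x = s}

variable {U : Finset α} {w : α → ℕ} {s : ℕ}

theorem isGreatest_subsetSums : IsGreatest (U.subsetSums w) (∑ x ∈ U, w x) :=
  ⟨⟨U, Subset.rfl, rfl⟩, by rintro _ ⟨S, hS, rfl⟩; exact sum_le_sum_of_subset hS⟩

theorem sum_sub_mem_subsetSums [DecidableEq α] (hs : s ∈ U.subsetSums w) :
    ∑ x ∈ U, w x - s ∈ U.subsetSums w := by
  obtain ⟨S, hS, rfl⟩ := hs
  exact ⟨U \ S, sdiff_subset, by rw [← sum_sdiff hS, Nat.add_sub_cancel]⟩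

theorem sub_two_pow_mem_subsetSums [DecidableEq α] {f : α → ℕ} {e : ℕ} (hf : ∀ x ∈ U, f x ≤ e)
    (hs : s ∈ U.subsetSums (2 ^ f ·)) (he : 2 ^ e ≤ s) : s - 2 ^ e ∈ U.subsetSums (2 ^ f ·) := by
  obtain ⟨S, hS, rfl⟩ := hs
  obtain ⟨S', hS', hsum⟩ := exists_subset_sum_two_pow_eq_s7 f S (fun x hx => hf x (hS hx)) he
  exact ⟨S \ S', sdiff_subset.trans hS, by rw [← sum_sdiff hS', hsum, Nat.add_sub_cancel]⟩

end Finset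

theorem sSup_sep_le_add_eq_min {T : Set ℕ} {top P : ℕ} (htop : IsGreatest T top)
    (hsymm : ∀ s ∈ T, top - s ∈ T) (hsub : ∀ s ∈ T, P ≤ s → s - P ∈ T) (d : ℕ) :
    sSup {s ∈ T | s ≤ P + d} = min (sSup {s ∈ T | s ≤ d} + P) top := by
  have hbdd : ∀ x, BddAbove {s ∈ T | s ≤ x} := fun x => ⟨x, fun s hs => hs.2⟩
  have hne : ∀ x, {s ∈ T | s ≤ x}.Nonempty := fun x =>
    ⟨0, by simpa using hsymm top htop.1, Nat.zero_le x⟩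
  set h := sSup {s ∈ T | s ≤ d}
  obtain ⟨hT, hd⟩ : h ∈ T ∧ h ≤ d := Nat.sSup_mem (hne d) (hbdd d)
  apply le_antisymm
  · refine csSup_le (hne _) fun s ⟨hs, hsd⟩ => le_min ?_ (htop.2 hs)
    by_cases hPs : P ≤ s
    · have := le_csSup (hbdd d) ⟨hsub s hs hPs, by omega⟩
      omega
    · omega
  · by_cases hcase : top ≤ h + P
    · exact (min_le_right _ _).trans (le_csSup (hbdd _) ⟨htop.1, by omega⟩)
    · have hhP : h + P ∈ T := by
        have := hsymm _ (hsub _ (hsymm h hT) (by omega))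
        rwa [show top - (top - h - P) = h + P by have := htop.2 hT; omega] at this
      exact (min_le_left _ _).trans (le_csSup (hbdd _) ⟨hhP, by omega⟩)

section

variable {ι : Type*} [Fintype ι]

theorem sum_filter_product_two_pow (Z : Finset ℕ) (P : ι × ℕ → Prop) [DecidablePred P] :
    ∑ p ∈ (univ ×ˢ Z).filter P, 2 ^ p.2 = ∑ i, ∑ j ∈ Z.filter (fun j => P (i, j)), 2 ^ j := by
  simp only [sum_filter, sum_product]

/-- The pair `(i, j)` records that binary digit `j` of `b i` is `1`. -/
theorem mem_subsetSums_product_iff [DecidableEq ι] (Z : Finset ℕ) (s : ℕ) :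
    s ∈ (univ ×ˢ Z : Finset (ι × ℕ)).subsetSums (2 ^ ·.2) ↔
      ∃ b : ι → ℕ, s = ∑ i, b i ∧ ∀ i, (b i).bitIndices.toFinset ⊆ Z := by
  constructor
  · rintro ⟨S, hS, rfl⟩
    refine ⟨fun i => ∑ j ∈ Z.filter (fun j => (i, j) ∈ S), 2 ^ j, ?_, fun i => ?_⟩
    · conv_lhs => rw [← inter_eq_right.2 hS, ← filter_mem_eq_inter]
      exact sum_filter_product_two_pow Z (· ∈ S)
    · rw [toFinset_bitIndices_sum_two_pow]
      exact filter_subset _ _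
  · rintro ⟨b, rfl, hb⟩
    refine ⟨(univ ×ˢ Z).filter (fun p => p.2 ∈ (b p.1).bitIndices.toFinset), filter_subset _ _, ?_⟩
    rw [sum_filter_product_two_pow]
    refine sum_congr rfl fun i _ => ?_
    dsimp only
    rw [filter_mem_eq_inter, inter_eq_right.2 (hb i), sum_toFinset_bitIndices_two_pow]

end

theorem htilde_eq_sSup_subsetSums {k n : ℕ} (Z : Finset ℕ)
    (hZ : ∀ b ≤ n, Disjoint n.bitIndices.toFinset b.bitIndices.toFinset ↔
      b.bitIndices.toFinset ⊆ Z) :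
    htilde k n =
      sSup {s ∈ (univ ×ˢ Z : Finset (Fin (k - 1) × ℕ)).subsetSums (2 ^ ·.2) | s ≤ n} := by
  have hodd : ∀ b : Fin (k - 1) → ℕ, ∑ i, b i ≤ n → ∀ i,
      Odd ((n + b i).choose n) ↔ (b i).bitIndices.toFinset ⊆ Z := fun b hb i => by
    rw [Nat.odd_choose_add_iff_disjoint,
      hZ _ ((single_le_sum (fun _ _ => Nat.zero_le _) (mem_univ i)).trans hb)]
  unfold htilde
  congr 1
  ext s
  rw [Set.mem_ofPred_eq, Set.mem_sep_iff, mem_subsetSums_product_iff]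
  constructor
  · rintro ⟨b, rfl, hsn, hb⟩
    exact ⟨⟨b, rfl, fun i => (hodd b hsn i).1 (hb i)⟩, hsn⟩
  · rintro ⟨⟨b, rfl, hb⟩, hsn⟩
    exact ⟨b, rfl, hsn, fun i => (hodd b hsn i).2 (hb i)⟩

theorem htilde_recursion_general (e d k : ℕ) (hd : d < 2 ^ e) :
    htilde k (2 ^ e + d) =
      min (htilde k d + 2 ^ e) ((k - 1) * (2 ^ (e + 1) - 1 - (2 ^ e + d))) := by
  set Z := range e \ d.bitIndices.toFinset
  set U : Finset (Fin (k - 1) × ℕ) := univ ×ˢ Z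
  have hU : ∀ p ∈ U, p.2 ≤ e := fun p hp =>
    (mem_range.1 (mem_sdiff.1 (mem_product.1 hp).2).1).le
  have htop : ∑ p ∈ U, 2 ^ p.2 = (k - 1) * (2 ^ (e + 1) - 1 - (2 ^ e + d)) := by
    simp only [U, sum_product, sum_const, card_univ, Fintype.card_fin, smul_eq_mul]
    rw [Nat.sum_range_sdiff_bitIndices hd, pow_succ]
    congr 1
    omega
  rw [htilde_eq_sSup_subsetSums Z fun b => Nat.disjoint_bitIndices_two_pow_add_iff_subset_of_le hd,
    htilde_eq_sSup_subsetSums Z fun b => Nat.disjoint_bitIndices_iff_subset_of_le hd, ← htop]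
  exact sSup_sep_le_add_eq_min isGreatest_subsetSums (fun _ => sum_sub_mem_subsetSums)
    (fun _ hs => sub_two_pow_mem_subsetSums hU hs) d

/-- If `n = 2^e + d` with `0 ≤ d < 2^e` and `k ≥ 2`, then
`htilde_k(n) = min(htilde_k(d) + 2^e, (k-1)(2^(e+1) - 1 - n))`. -/
theorem htilde_recursion (e d k : ℕ) (hd : d < 2 ^ e) (hk : 2 ≤ k) :
    htilde k (2 ^ e + d) =
      min (htilde k d + 2 ^ e) ((k - 1) * (2 ^ (e + 1) - 1 - (2 ^ e + d))) :=
  htilde_recursion_general e d k hd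
end

section
/- For all n ≥ 0 and k ≥ 2, zcl_k(n) = (k−1)·n + h̃_k(n); that is, the maximum of a_1 + ⋯ + a_{k−1} over tuples with ∏_{i=1}^{k−1}(x_i + x_k)^{a_i} nonzero in (ℤ/2)[x_1,…,x_k]/(x_1^{n+1},…,x_k^{n+1}) is achieved by monomials of the form x_1^n ⋯ x_{k−1}^n x_k^ℓ with ℓ ≤ n, and equals (k−1)n + h̃_k(n). -/
/-!
Expanding, `∏ (x_i + x_k) ^ a_i = ∑_e ∏ C(a_i, e_i) x^e x_k ^ (∑ (a_i - e_i))`, so the product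
survives the truncation iff some `e` with all `e_i ≤ n` has every `C(a_i, e_i)` odd and
`∑ (a_i - e_i) ≤ n`. By Lucas's theorem `C(c + b, c)` is odd iff `c` and `b` share no binary
digit. Such a witness can always be pushed to `e_i = n`: if `c ≤ n` and `c`, `b` share no digit,
then some `b' ≤ b` sharing no digit with `n` has `c + b ≤ n + b'`. Hence the maximum is attained
at some `a_i = n + b_i`, and the admissible `b` are exactly those in the definition of `h̃_k(n)`.
-/

namespace Nat

theorem land_eq_zero_iff_mod_and_div (t a b : ℕ) :
    a &&& b = 0 ↔ a % 2 ^ t &&& b % 2 ^ t = 0 ∧ a / 2 ^ t &&& b / 2 ^ t = 0 := by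
  rw [← and_mod_two_pow, ← and_div_two_pow]
  refine ⟨fun h => by simp [h], fun ⟨hmod, hdiv⟩ => ?_⟩
  rw [← Nat.mod_add_div (a &&& b) (2 ^ t), hmod, hdiv, mul_zero, add_zero]

theorem add_eq_lor_of_land_eq_zero {a b : ℕ} (h : a &&& b = 0) : a + b = a ||| b := by
  induction a using Nat.strong_induction_on generalizing b with
  | _ a ih =>
  rcases a.eq_zero_or_pos with rfl | ha
  · simp
  obtain ⟨hmod, hdiv⟩ := (land_eq_zero_iff_mod_and_div 1 a b).1 h
  have hhigh := ih (a / 2 ^ 1) (by omega) hdiv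
  have hlow : a % 2 ^ 1 + b % 2 ^ 1 = a % 2 ^ 1 ||| b % 2 ^ 1 := by
    rcases Nat.mod_two_eq_zero_or_one a with h₁ | h₁ <;>
      rcases Nat.mod_two_eq_zero_or_one b with h₂ | h₂ <;> simp_all
  rw [← Nat.mod_add_div (a ||| b) (2 ^ 1), or_mod_two_pow, or_div_two_pow, ← hhigh, ← hlow]
  omega

theorem add_lt_two_pow_of_land_eq_zero {a b t : ℕ} (ha : a < 2 ^ t) (hb : b < 2 ^ t)
    (h : a &&& b = 0) : a + b < 2 ^ t :=
  add_eq_lor_of_land_eq_zero h ▸ or_lt_two_pow ha hb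

theorem two_pow_sub_one_sub_land_self {m t : ℕ} (h : m < 2 ^ t) : (2 ^ t - 1 - m) &&& m = 0 := by
  apply Nat.eq_of_testBit_eq
  intro i
  rw [show 2 ^ t - 1 - m = 2 ^ t - (m + 1) by omega]
  simp [testBit_two_pow_sub_succ h]

theorem odd_choose_add_iff_s8 (a b : ℕ) : Odd ((a + b).choose a) ↔ a &&& b = 0 := by
  induction a using Nat.strong_induction_on generalizing b with
  | _ a ih =>
  rcases a.eq_zero_or_pos with rfl | ha
  · simp
  have : Fact (Nat.Prime 2) := ⟨Nat.prime_two⟩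
  have lucas : (a + b).choose a % 2 =
      ((a + b) % 2).choose (a % 2) * ((a + b) / 2).choose (a / 2) % 2 :=
    Choose.choose_modEq_choose_mod_mul_choose_div_nat
  rw [land_eq_zero_iff_mod_and_div 1, pow_one, Nat.odd_iff, lucas]
  obtain ⟨h₁, h₂⟩ | ⟨hmod, hdiv⟩ : (a % 2 = 1 ∧ b % 2 = 1) ∨
      ((a + b) % 2 = a % 2 + b % 2 ∧ (a + b) / 2 = a / 2 + b / 2) := by omega
  · rw [show (a + b) % 2 = 0 by omega, h₁, h₂]
    simp
  · have hsmall : (a % 2 + b % 2).choose (a % 2) = 1 ∧ a % 2 &&& b % 2 = 0 := by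
      rcases Nat.mod_two_eq_zero_or_one a with h₁ | h₁ <;>
        rcases Nat.mod_two_eq_zero_or_one b with h₂ | h₂ <;> first | omega | simp_all
    rw [hmod, hdiv, hsmall.1, one_mul, ← Nat.odd_iff, ih (a / 2) (by omega)]
    simp [hsmall.2]

theorem exists_le_land_eq_zero_add_le {n b c : ℕ} (hcn : c ≤ n) (hcb : c &&& b = 0) :
    ∃ b' ≤ b, b' &&& n = 0 ∧ c + b ≤ n + b' := by
  by_cases hbn : b &&& n = 0
  · exact ⟨b, le_rfl, hbn, by omega⟩
  -- `2 ^ i` is the top binary digit shared by `b` and `n`; `b'` keeps the digits of `b` above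
  -- it and fills every position below it that is free in `n`.
  set i := Nat.log 2 (b &&& n)
  set N := 2 ^ (i + 1) with hN
  have hlt : b &&& n < N := Nat.lt_pow_succ_log_self one_lt_two _
  have hhigh : b / N &&& n / N = 0 := by rw [← and_div_two_pow, Nat.div_eq_of_lt hlt]
  have hlow : 2 ^ i ≤ b % N &&& n % N := by
    rw [← and_mod_two_pow, Nat.mod_eq_of_lt hlt]
    exact Nat.pow_log_le_self 2 hbn
  have hb : 2 ^ i ≤ b % N := hlow.trans and_le_left
  have hn : 2 ^ i ≤ n % N := hlow.trans and_le_right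
  have hNi : N = 2 * 2 ^ i := by rw [hN, pow_succ, mul_comm]
  have hNpos : 0 < N := by positivity
  have hn_lt : n % N < N := Nat.mod_lt _ hNpos
  clear_value N i
  have hc_split := Nat.div_add_mod c N
  have hb_split := Nat.div_add_mod b N
  have hn_split := Nat.div_add_mod n N
  refine ⟨N * (b / N) + (N - 1 - n % N), by omega, ?_, ?_⟩
  · have hdiv : (N * (b / N) + (N - 1 - n % N)) / N = b / N := by
      rw [Nat.mul_add_div hNpos, Nat.div_eq_of_lt (a := N - 1 - n % N) (by omega), add_zero]
    have hmod : (N * (b / N) + (N - 1 - n % N)) % N = N - 1 - n % N := by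
      rw [Nat.mul_add_mod, Nat.mod_eq_of_lt (a := N - 1 - n % N) (by omega)]
    rw [land_eq_zero_iff_mod_and_div (i + 1), ← hN, hdiv, hmod]
    refine ⟨?_, hhigh⟩
    subst hN
    exact two_pow_sub_one_sub_land_self hn_lt
  · obtain ⟨hcb_low, -⟩ := (land_eq_zero_iff_mod_and_div (i + 1) c b).1 hcb
    have hsum : c % N + b % N < N := by
      subst hN
      exact add_lt_two_pow_of_land_eq_zero (Nat.mod_lt _ hNpos) (Nat.mod_lt _ hNpos) hcb_low
    have hq : N * (c / N) ≤ N * (n / N) := Nat.mul_le_mul_left _ (Nat.div_le_div_right hcn)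
    omega

theorem exists_odd_choose_add_le {n a e : ℕ} (hen : e ≤ n) (hodd : Odd (a.choose e)) :
    ∃ b ≤ a - e, Odd ((n + b).choose n) ∧ a ≤ n + b := by
  have hea : e ≤ a := by
    by_contra h
    simp [Nat.choose_eq_zero_of_lt (not_le.1 h)] at hodd
  rw [← Nat.add_sub_cancel' hea, odd_choose_add_iff_s8] at hodd
  obtain ⟨b, hb, hbn, hle⟩ := exists_le_land_eq_zero_add_le hen hodd
  exact ⟨b, hb, (odd_choose_add_iff_s8 n b).2 (by rwa [land_comm]), by omega⟩

end Nat

namespace MvPolynomial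

variable {σ R : Type*} [CommSemiring R]

theorem mem_span_X_pow_iff (n : ℕ) (p : MvPolynomial σ R) :
    p ∈ Ideal.span (Set.range fun i => (X i : MvPolynomial σ R) ^ n) ↔
      ∀ m ∈ p.support, ∃ i, n ≤ m i := by
  have : (Set.range fun i => (X i : MvPolynomial σ R) ^ n) =
      (fun s => monomial s (1 : R)) '' Set.range fun i => Finsupp.single i n := by
    rw [← Set.range_comp]
    simp [Function.comp_def, X_pow_eq_monomial]
  simp [this, mem_ideal_span_monomial_image, Finsupp.single_le_iff]

variable {K : ℕ}

noncomputable def snocExp (e : Fin K → ℕ) (d : ℕ) : Fin (K + 1) →₀ ℕ :=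
  Finsupp.equivFunOnFinite.symm (Fin.snoc e d)

theorem snocExp_injective : Function.Injective2 (snocExp (K := K)) := by
  intro e₁ d₁ e₂ d₂ h
  have h' := congrArg (⇑) h
  simp only [snocExp, Finsupp.coe_equivFunOnFinite_symm] at h'
  exact ⟨by simpa using congrArg Fin.init h', by simpa using congrFun h' (Fin.last K)⟩

theorem snocExp_init_last (m : Fin (K + 1) →₀ ℕ) :
    snocExp (fun i => m i.castSucc) (m (Fin.last K)) = m :=
  Finsupp.equivFunOnFinite.symm_apply_eq.2 (Fin.snoc_init_self (α := fun _ => ℕ) m)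

theorem prod_X_add_X_last_pow (a : Fin K → ℕ) :
    ∏ i, (X i.castSucc + X (Fin.last K) : MvPolynomial (Fin (K + 1)) R) ^ a i =
      ∑ e ∈ Fintype.piFinset fun i => Finset.range (a i + 1),
        monomial (snocExp e (∑ i, (a i - e i))) (∏ i, ((a i).choose (e i) : R)) := by
  have hpow (i : Fin K) : (X i.castSucc + X (Fin.last K) : MvPolynomial (Fin (K + 1)) R) ^ a i =
      ∑ j ∈ Finset.range (a i + 1), monomial
          (Finsupp.single i.castSucc j + Finsupp.single (Fin.last K) (a i - j))
          ((a i).choose j : R) := by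
    rw [add_pow]
    refine Finset.sum_congr rfl fun j _ => ?_
    rw [X_pow_eq_monomial, X_pow_eq_monomial, monomial_mul, ← map_natCast C, C_apply,
      monomial_mul, add_zero, one_mul, one_mul]
  rw [Finset.prod_congr rfl fun i _ => hpow i, Finset.prod_univ_sum]
  refine Finset.sum_congr rfl fun e _ => ?_
  rw [← monomial_sum_prod]
  congr 2
  ext j
  induction j using Fin.lastCases with
  | last => simp [snocExp, Finsupp.finsetSum_apply]
  | cast j => simp [snocExp, Finsupp.finsetSum_apply, Finsupp.single_apply]

theorem coeff_snocExp_prod_X_add_X_last_pow (a e : Fin K → ℕ) (d : ℕ) :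
    coeff (snocExp e d)
        (∏ i, (X i.castSucc + X (Fin.last K) : MvPolynomial (Fin (K + 1)) R) ^ a i) =
      if ∑ i, (a i - e i) = d then ∏ i, ((a i).choose (e i) : R) else 0 := by
  simp_rw [prod_X_add_X_last_pow, coeff_sum, coeff_monomial, snocExp_injective.eq_iff, ite_and]
  rw [Finset.sum_ite_eq', ite_eq_left_iff]
  intro he
  simp only [Fintype.mem_piFinset, Finset.mem_range, not_forall, not_lt] at he
  obtain ⟨i, hi⟩ := he
  rw [Finset.prod_eq_zero (Finset.mem_univ i) (by simp [Nat.choose_eq_zero_of_lt hi]), ite_self]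

theorem mk_prod_X_add_X_last_pow_ne_zero_iff (n : ℕ) (a : Fin K → ℕ) :
    Ideal.Quotient.mk (Ideal.span (Set.range fun i : Fin (K + 1) =>
        (X i : MvPolynomial (Fin (K + 1)) (ZMod 2)) ^ (n + 1)))
      (∏ i : Fin K, (X i.castSucc + X (Fin.last K)) ^ a i) ≠ 0 ↔
      ∃ e : Fin K → ℕ, (∀ i, e i ≤ n) ∧ (∀ i, Odd ((a i).choose (e i))) ∧ ∑ i, (a i - e i) ≤ n := by
  simp_rw [Ne, Ideal.Quotient.eq_zero_iff_mem, mem_span_X_pow_iff, not_forall, not_exists, not_le,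
    Nat.lt_succ_iff, exists_prop]
  constructor
  · rintro ⟨m, hm, hle⟩
    rw [← snocExp_init_last m, mem_support_iff, coeff_snocExp_prod_X_add_X_last_pow,
      ite_ne_right_iff] at hm
    obtain ⟨hd, hm⟩ := hm
    refine ⟨fun i => m i.castSucc, fun i => hle _, fun i => ?_, hd ▸ hle _⟩
    exact ZMod.natCast_ne_zero_iff_odd.1 (Finset.prod_ne_zero_iff.1 hm i (Finset.mem_univ _))
  · rintro ⟨e, hen, hodd, hsum⟩
    refine ⟨snocExp e (∑ i, (a i - e i)), ?_, fun j => ?_⟩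
    · rw [mem_support_iff, coeff_snocExp_prod_X_add_X_last_pow, if_pos rfl]
      exact Finset.prod_ne_zero_iff.2 fun i _ => ZMod.natCast_ne_zero_iff_odd.2 (hodd i)
    · induction j using Fin.lastCases with
      | last => simpa [snocExp] using hsum
      | cast j => simpa [snocExp] using hen j

end MvPolynomial

theorem isGreatest_htilde (k n : ℕ) :
    IsGreatest {s : ℕ | ∃ b : Fin (k - 1) → ℕ, s = ∑ i, b i ∧ s ≤ n ∧
      ∀ i, Odd ((n + b i).choose n)} (htilde k n) := by
  refine ⟨Nat.sSup_mem ⟨0, fun _ => 0, by simp, by simp, by simp⟩ ?bdd,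
    fun _ hs => le_csSup ?bdd hs⟩
  exact ⟨n, fun _ ⟨_, _, hs, _⟩ => hs⟩

theorem zcl_eq_htilde_general (n k : ℕ) :
    zcl k n = (k - 1) * n + htilde k n := by
  obtain ⟨⟨b, hb_sum, hb_le, hb_odd⟩, hb_max⟩ := isGreatest_htilde k n
  have hsum_add (c : Fin (k - 1) → ℕ) : ∑ i, (n + c i) = (k - 1) * n + ∑ i, c i := by
    simp [Finset.sum_add_distrib]
  refine IsGreatest.csSup_eq ⟨⟨fun i => n + b i, by rw [hsum_add, hb_sum], ?_⟩, ?_⟩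
  · refine (MvPolynomial.mk_prod_X_add_X_last_pow_ne_zero_iff n _).2
      ⟨fun _ => n, fun _ => le_rfl, hb_odd, ?_⟩
    simpa [← hb_sum] using hb_le
  · rintro s ⟨a, rfl, ha⟩
    obtain ⟨e, hen, hodd, hsum⟩ := (MvPolynomial.mk_prod_X_add_X_last_pow_ne_zero_iff n a).1 ha
    choose c hc_le hc_odd hac using fun i => Nat.exists_odd_choose_add_le (hen i) (hodd i)
    have hc_max : ∑ i, c i ≤ htilde k n :=
      hb_max ⟨c, rfl, (Finset.sum_le_sum fun i _ => hc_le i).trans hsum, hc_odd⟩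
    calc ∑ i, a i ≤ ∑ i, (n + c i) := Finset.sum_le_sum fun i _ => hac i
      _ ≤ (k - 1) * n + htilde k n := by rw [hsum_add]; omega

/-- For all `n ≥ 0` and `k ≥ 2`, `zcl_k(n) = (k-1)*n + htilde_k(n)`. -/
theorem zcl_eq_htilde (n k : ℕ) (hk : 2 ≤ k) :
    zcl k n = (k - 1) * n + htilde k n :=
  zcl_eq_htilde_general n k
end

section
/- If n is a positive even integer and ℓ is the length of the longest string of consecutive 1's in the binary expansion of n, then for every k ≥ 2^{ℓ+1} − 1 one has zcl_k(n) = k·n. -/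
namespace Nat

theorem odd_choose_add_of_and_eq_zero {n b : ℕ} (h : n &&& b = 0) : Odd ((n + b).choose n) := by
  rw [← ZMod.natCast_eq_one_iff_odd]
  induction n using Nat.strong_induction_on generalizing b with
  | _ n ih =>
    rcases Nat.eq_zero_or_pos n with rfl | hn
    · simp
    have hbits : ¬(n % 2 = 1 ∧ b % 2 = 1) := fun hodd => by
      simpa [h] using Nat.and_mod_two_eq_one.mpr hodd
    have hdiv : (n + b) / 2 = n / 2 + b / 2 := by omega
    have hmod : (n + b) % 2 = n % 2 + b % 2 := by omega
    have hlow : (n % 2 + b % 2).choose (n % 2) = 1 := by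
      rcases Nat.mod_two_eq_zero_or_one n with hn2 | hn2 <;> simp_all
    rw [(ZMod.natCast_eq_natCast_iff _ _ 2).mpr Choose.choose_modEq_choose_mod_mul_choose_div_nat,
      hdiv, hmod, hlow, one_mul]
    exact ih (n / 2) (by omega) (by rw [← Nat.and_div_two, h])

theorem two_pow_mul_add_and_two_pow_mul_add {k x y : ℕ} (a b : ℕ) (hx : x < 2 ^ k)
    (hy : y < 2 ^ k) :
    (2 ^ k * a + x) &&& (2 ^ k * b + y) = 2 ^ k * (a &&& b) + (x &&& y) := by
  apply Nat.eq_of_testBit_eq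
  intro i
  simp only [Nat.testBit_and, Nat.testBit_two_pow_mul_add _ hx, Nat.testBit_two_pow_mul_add _ hy,
    Nat.testBit_two_pow_mul_add _ (Nat.and_lt_two_pow x hy)]
  split_ifs <;> rfl

theorem exists_testBit_lt_and_mod_two_pow_succ_eq (u : ℕ) :
    ∃ L, (∀ t < L, u.testBit t) ∧ u % 2 ^ (L + 1) = 2 ^ L - 1 := by
  have hzero : ∃ L, u.testBit L = false :=
    ⟨u, Nat.testBit_lt_two_pow Nat.lt_two_pow_self⟩
  refine ⟨Nat.find hzero, fun t ht => by simpa using Nat.find_min hzero ht, ?_⟩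
  apply Nat.eq_of_testBit_eq
  intro i
  rw [Nat.testBit_mod_two_pow, Nat.testBit_two_pow_sub_one]
  rcases lt_trichotomy i (Nat.find hzero) with hi | rfl | hi
  · simpa [hi, show i < Nat.find hzero + 1 by omega] using Nat.find_min hzero hi
  · simpa using Nat.find_spec hzero
  · simp [show ¬i < Nat.find hzero by omega, show ¬i < Nat.find hzero + 1 by omega]

end Nat

def IsCarryFreeSplitting {K : ℕ} (n : ℕ) (b : Fin K → ℕ) : Prop :=
  ∑ i, b i = n ∧ ∀ i, n &&& b i = 0

-- If the lowest block of ones of `2 * u` occupies bits `1, …, L`, its value `2 ^ (L + 1) - 2` is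
-- spread as `1` over that many summands; the rest of `2 * u` is a scaled splitting of `2 * w`.
theorem IsCarryFreeSplitting.two_pow_succ_mul_add {K L w : ℕ} {b : Fin K → ℕ}
    (hb : IsCarryFreeSplitting (2 * w) b) (hL : 2 ^ (L + 1) - 2 ≤ K) :
    IsCarryFreeSplitting (2 * (2 ^ (L + 1) * w + (2 ^ L - 1)))
      (fun i => 2 ^ (L + 1) * b i + if (i : ℕ) < 2 ^ (L + 1) - 2 then 1 else 0) := by
  have hpow : 2 ≤ 2 ^ (L + 1) := Nat.le_self_pow (by omega) 2
  have hn : 2 * (2 ^ (L + 1) * w + (2 ^ L - 1)) = 2 ^ (L + 1) * (2 * w) + (2 ^ (L + 1) - 2) := by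
    rw [pow_succ] at hpow ⊢
    zify [Nat.one_le_two_pow, hpow]
    ring
  rw [hn]
  constructor
  · rw [Finset.sum_add_distrib, ← Finset.mul_sum, hb.1, Finset.sum_boole, Fin.card_filter_val_lt,
      min_eq_right hL, Nat.cast_id]
  · intro i
    rw [Nat.two_pow_mul_add_and_two_pow_mul_add _ _ (by omega) (by split_ifs <;> omega), hb.2 i]
    split_ifs
    · rw [Nat.and_one_is_mod]
      omega
    · simp

theorem exists_isCarryFreeSplitting_two_mul {K : ℕ} (u : ℕ)
    (hruns : ∀ L j, (∀ t < L, u.testBit (j + t)) → 2 ^ (L + 1) - 2 ≤ K) :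
    ∃ b : Fin K → ℕ, IsCarryFreeSplitting (2 * u) b := by
  induction u using Nat.strong_induction_on with
  | _ u ih =>
    rcases Nat.eq_zero_or_pos u with rfl | hu
    · exact ⟨0, by simp [IsCarryFreeSplitting]⟩
    obtain ⟨L, hones, hlow⟩ := Nat.exists_testBit_lt_and_mod_two_pow_succ_eq u
    obtain ⟨b, hb⟩ := ih (u / 2 ^ (L + 1)) (Nat.div_lt_self hu (Nat.one_lt_two_pow (by omega)))
      fun L' j hrun => hruns L' (j + (L + 1)) fun t ht => by
        simpa [Nat.testBit_div_two_pow, add_right_comm] using hrun t ht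
    rw [← Nat.div_add_mod u (2 ^ (L + 1)), hlow]
    exact ⟨_, hb.two_pow_succ_mul_add (hruns L 0 (by simpa using hones))⟩

open MvPolynomial Finsupp

namespace MvPolynomial

variable {σ R : Type*}

section CommSemiring

variable [CommSemiring R]

theorem coeff_single_add_single_add_mul_X_add_X_pow {c z : σ} (hcz : c ≠ z)
    {P : MvPolynomial σ R} (hP : c ∉ P.vars) {d : σ →₀ ℕ} (hd : d c = 0) (t u : ℕ) :
    coeff (single c t + single z u + d) ((X c + X z) ^ (t + u) * P) =
      (t + u).choose t * coeff d P := by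
  classical
  have hterm (s : ℕ) : (X c : MvPolynomial σ R) ^ s * X z ^ (t + u - s) *
      ((t + u).choose s : MvPolynomial σ R) =
        monomial (single c s + single z (t + u - s)) ((t + u).choose s : R) := by
    rw [X_pow_eq_monomial, X_pow_eq_monomial, monomial_mul, ← C_eq_coe_nat, mul_comm,
      C_mul_monomial]
    simp
  simp only [add_pow, Finset.sum_mul, coeff_sum, hterm, coeff_monomial_mul']
  rw [Finset.sum_eq_single t]
  · rw [Nat.add_sub_cancel_left, add_tsub_cancel_left, if_pos le_self_add]
  · intro s _ hst
    split_ifs with hle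
    · have hsc : s ≤ t := by simpa [single_apply, hcz, hd] using hle c
      rw [notMem_support_iff.mp fun hmem => hst ?_, mul_zero]
      have := mem_support_notMem_vars_zero hmem hP
      simp [hcz, hd] at this
      omega
    · rfl
  · simp

theorem vars_prod_X_add_X_pow_subset [DecidableEq σ] [Nontrivial R] {ι : Type*} (s : Finset ι)
    (c : ι → σ) (z : σ) (a : ι → ℕ) :
    (∏ i ∈ s, (X (c i) + X z : MvPolynomial σ R) ^ a i).vars ⊆ insert z (s.image c) := by
  refine (vars_prod _).trans (Finset.biUnion_subset.mpr fun i hi => ?_)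
  refine (vars_pow _ _).trans ((vars_add_subset _ _).trans (Finset.union_subset ?_ ?_))
  · simpa [vars_X] using Finset.mem_insert_of_mem (Finset.mem_image_of_mem c hi)
  · simp [vars_X]

theorem coeff_sum_single_add_single_sum_prod_X_add_X_pow [Nontrivial R] {ι : Type*}
    {c : ι → σ} (hc : Function.Injective c) {z : σ} (hz : ∀ i, c i ≠ z) (n : ℕ) (b : ι → ℕ)
    (s : Finset ι) :
    coeff (∑ i ∈ s, single (c i) n + single z (∑ i ∈ s, b i))
      (∏ i ∈ s, (X (c i) + X z : MvPolynomial σ R) ^ (n + b i)) =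
      ∏ i ∈ s, ((n + b i).choose n : R) := by
  classical
  induction s using Finset.induction_on with
  | empty => simp
  | insert j s hj ih =>
    have hsplit : ∑ i ∈ insert j s, single (c i) n + single z (∑ i ∈ insert j s, b i) =
        single (c j) n + single z (b j) + (∑ i ∈ s, single (c i) n + single z (∑ i ∈ s, b i)) := by
      rw [Finset.sum_insert hj, Finset.sum_insert hj, single_add]
      abel
    have hvars : c j ∉ (∏ i ∈ s, (X (c i) + X z : MvPolynomial σ R) ^ (n + b i)).vars :=
      fun h => by
        simpa [hz j, hc.eq_iff, hj] using vars_prod_X_add_X_pow_subset s c z _ h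
    rw [hsplit, Finset.prod_insert hj, Finset.prod_insert hj,
      coeff_single_add_single_add_mul_X_add_X_pow (hz j) hvars, ih]
    simp [single_apply, hc.eq_iff, (hz j).symm, hj]

end CommSemiring

theorem mk_span_X_pow_eq_zero_iff [CommRing R] (N : ℕ) (p : MvPolynomial σ R) :
    Ideal.Quotient.mk (Ideal.span (Set.range fun i => (X i : MvPolynomial σ R) ^ N)) p = 0 ↔
      ∀ d ∈ p.support, ∃ i, N ≤ d i := by
  have hgen : Set.range (fun i => (X i : MvPolynomial σ R) ^ N) =
      (fun s => monomial s (1 : R)) '' Set.range fun i => single i N := by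
    rw [← Set.range_comp]
    simp [Function.comp_def, X_pow_eq_monomial]
  simp [Ideal.Quotient.eq_zero_iff_mem, hgen, mem_ideal_span_monomial_image, single_le_iff]

theorem IsHomogeneous.le_card_mul_of_mk_ne_zero [CommRing R] [Fintype σ] {p : MvPolynomial σ R}
    {D N : ℕ} (hp : p.IsHomogeneous D)
    (h : Ideal.Quotient.mk
      (Ideal.span (Set.range fun i => (X i : MvPolynomial σ R) ^ (N + 1))) p ≠ 0) :
    D ≤ Fintype.card σ * N := by
  rw [Ne, mk_span_X_pow_eq_zero_iff] at h
  push Not at h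
  obtain ⟨d, hd, hle⟩ := h
  have hdeg : d.degree = D := by
    by_contra hne
    exact mem_support_iff.mp hd (hp.coeff_eq_zero hne)
  calc D = ∑ i, d i := by rw [← hdeg, degree_eq_sum]
    _ ≤ ∑ _i : σ, N := Finset.sum_le_sum fun i _ => Nat.le_of_lt_succ (hle i)
    _ = Fintype.card σ * N := by simp

end MvPolynomial

theorem sum_le_of_mk_prod_X_castSucc_add_X_last_pow_ne_zero {R : Type*} [CommRing R] {m n : ℕ}
    (a : Fin m → ℕ)
    (h : Ideal.Quotient.mk (Ideal.span (Set.range fun i : Fin (m + 1) =>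
        (X i : MvPolynomial (Fin (m + 1)) R) ^ (n + 1)))
      (∏ i : Fin m, (X i.castSucc + X (Fin.last m)) ^ a i) ≠ 0) :
    ∑ i, a i ≤ (m + 1) * n := by
  have hhom : (∏ i : Fin m, (X i.castSucc + X (Fin.last m) :
      MvPolynomial (Fin (m + 1)) R) ^ a i).IsHomogeneous (∑ i, a i) :=
    IsHomogeneous.prod _ _ _ fun i _ => by
      simpa using ((isHomogeneous_X _ _).add (isHomogeneous_X _ _)).pow (a i)
  simpa using hhom.le_card_mul_of_mk_ne_zero h

theorem mk_prod_X_castSucc_add_X_last_pow_ne_zero {m n : ℕ} {b : Fin m → ℕ}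
    (hb : IsCarryFreeSplitting n b) :
    Ideal.Quotient.mk (Ideal.span (Set.range fun i : Fin (m + 1) =>
        (X i : MvPolynomial (Fin (m + 1)) (ZMod 2)) ^ (n + 1)))
      (∏ i : Fin m, (X i.castSucc + X (Fin.last m)) ^ (n + b i)) ≠ 0 := by
  rw [Ne, mk_span_X_pow_eq_zero_iff]
  push Not
  refine ⟨∑ j, single j n, ?_, fun j => ?_⟩
  · have hD : ∑ j, single j n =
        ∑ i : Fin m, single i.castSucc n + single (Fin.last m) (∑ i, b i) := by
      rw [Fin.sum_univ_castSucc, hb.1]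
    rw [MvPolynomial.mem_support_iff, hD, coeff_sum_single_add_single_sum_prod_X_add_X_pow
        (Fin.castSucc_injective m) Fin.castSucc_ne_last,
      Finset.prod_eq_one fun i _ => (Nat.odd_choose_add_of_and_eq_zero (hb.2 i)).natCast_zmod_two]
    exact one_ne_zero
  · simp [finsetSum_apply, single_apply]

theorem zcl_eq_of_le_general (n l : ℕ) (he : Even n)
    (hmax : ∀ l', (∃ j, ∀ t < l', n.testBit (j + t)) → l' ≤ l)
    (k : ℕ) (hk : 2 ^ (l + 1) - 1 ≤ k) :
    zcl k n = k * n := by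
  obtain ⟨u, rfl⟩ := he.two_dvd
  obtain ⟨m, rfl⟩ : ∃ m, k = m + 1 :=
    ⟨k - 1, by have := Nat.one_lt_two_pow (n := l + 1) (by omega); omega⟩
  have hruns : ∀ L j, (∀ t < L, u.testBit (j + t)) → 2 ^ (L + 1) - 2 ≤ m := fun L j hrun => by
    have hL : L ≤ l := hmax L ⟨j + 1, fun t ht => by
      simpa [add_right_comm j 1 t, Nat.testBit_succ] using hrun t ht⟩
    have := Nat.pow_le_pow_right two_pos (Nat.succ_le_succ hL)
    omega
  obtain ⟨b, hb⟩ := exists_isCarryFreeSplitting_two_mul u hruns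
  refine IsGreatest.csSup_eq
    ⟨⟨fun i => 2 * u + b i, ?_, mk_prod_X_castSucc_add_X_last_pow_ne_zero hb⟩, ?_⟩
  · simp [Finset.sum_add_distrib, hb.1]
    ring
  · rintro s ⟨a, rfl, ha⟩
    exact sum_le_of_mk_prod_X_castSucc_add_X_last_pow_ne_zero a ha

/-- If `n` is a positive even integer and `l` is the length of the longest string of
consecutive 1's in the binary expansion of `n`, then `zcl_k(n) = k*n`
for every `k ≥ 2^(l+1) - 1`. -/
theorem zcl_eq_of_le (n l : ℕ) (hn : 0 < n) (he : Even n)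
    (hex : ∃ j, ∀ t < l, n.testBit (j + t))
    (hmax : ∀ l', (∃ j, ∀ t < l', n.testBit (j + t)) → l' ≤ l)
    (k : ℕ) (hk : 2 ^ (l + 1) - 1 ≤ k) :
    zcl k n = k * n :=
  zcl_eq_of_le_general n l he hmax k hk
end

section
/- For k ≥ 2 and e ≥ 1: zcl_k(3·2^e) = (k−1)(2^{e+2} − 1) if either (e = 1 and k ≤ 6) or (e ≥ 2 and k ≤ 4), and zcl_k(3·2^e) = k·3·2^e otherwise. -/
open MvPolynomial Finset

namespace ZclAux


/-- Lucas corollary: `C(3·2^e + t, 3·2^e)` is odd for `t < 2^e`. -/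
lemma choose_odd : ∀ (e t : ℕ), t < 2 ^ e → (3 * 2 ^ e + t).choose (3 * 2 ^ e) % 2 = 1 := by
  intro e
  induction e with
  | zero =>
      intro t ht
      interval_cases t
      decide
  | succ e ih =>
      intro t ht
      have hp : Fact (Nat.Prime 2) := ⟨Nat.prime_two⟩
      have h := @Choose.choose_modEq_choose_mod_mul_choose_div_nat
        (3 * 2 ^ (e+1) + t) (3 * 2 ^ (e+1)) 2 hp
      have h1 : (3 * 2 ^ (e+1) + t) % 2 = t % 2 := by
        have : 3 * 2 ^ (e+1) + t = 2 * (3 * 2 ^ e) + t := by ring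
        rw [this, Nat.mul_add_mod]
      have h2 : (3 * 2 ^ (e+1) + t) / 2 = 3 * 2 ^ e + t / 2 := by
        have : 3 * 2 ^ (e+1) + t = 2 * (3 * 2 ^ e) + t := by ring
        rw [this, Nat.mul_add_div (by norm_num)]
      have h3 : (3 * 2 ^ (e+1)) % 2 = 0 := by
        have : 3 * 2 ^ (e+1) = 2 * (3 * 2 ^ e) := by ring
        omega
      have h4 : (3 * 2 ^ (e+1)) / 2 = 3 * 2 ^ e := by
        have : 3 * 2 ^ (e+1) = 2 * (3 * 2 ^ e) := by ring
        omega
      rw [h1, h2, h3, h4, Nat.choose_zero_right, one_mul] at h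
      have h5 : t / 2 < 2 ^ e := by
        have : t < 2 * 2 ^ e := by rw [pow_succ] at ht; omega
        omega
      have := ih (t / 2) h5
      unfold Nat.ModEq at h
      omega

variable (κ n : ℕ)

/-- The truncation ideal. -/
noncomputable abbrev I : Ideal (MvPolynomial (Fin (κ + 1)) (ZMod 2)) :=
  Ideal.span (Set.range fun i : Fin (κ + 1) =>
    (X i : MvPolynomial (Fin (κ + 1)) (ZMod 2)) ^ (n + 1))

variable {κ n}

lemma monomial_mem {m : Fin (κ + 1) →₀ ℕ} {c : ZMod 2} (j : Fin (κ + 1))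
    (hj : n + 1 ≤ m j) : (monomial m c : MvPolynomial (Fin (κ+1)) (ZMod 2)) ∈ I κ n := by
  have h : Finsupp.single j (n + 1) ≤ m := Finsupp.single_le_iff.mpr hj
  have : (monomial m c : MvPolynomial (Fin (κ+1)) (ZMod 2))
      = X j ^ (n + 1) * monomial (m - Finsupp.single j (n + 1)) c := by
    rw [X_pow_eq_monomial, monomial_mul, one_mul, add_tsub_cancel_of_le h]
  rw [this]
  exact Ideal.mul_mem_right _ _ (Ideal.subset_span ⟨j, rfl⟩)

lemma coeff_eq_zero_of_mem {m : Fin (κ + 1) →₀ ℕ} (hm : ∀ j, m j ≤ n)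
    {p : MvPolynomial (Fin (κ+1)) (ZMod 2)} (hp : p ∈ I κ n) : coeff m p = 0 := by
  rw [Ideal.mem_span_range_iff_exists_fun] at hp
  obtain ⟨c, rfl⟩ := hp
  rw [coeff_sum]
  refine Finset.sum_eq_zero fun j _ => ?_
  rw [X_pow_eq_monomial, coeff_mul_monomial']
  rw [if_neg]
  intro hle
  have := Finsupp.single_le_iff.mp hle
  exact absurd (hm j) (by omega)

lemma prod_monomial {ι : Type*} (s : Finset ι) (f : ι → (Fin (κ+1) →₀ ℕ)) (b : ι → ZMod 2) :
    (∏ i ∈ s, (monomial (f i) (b i) : MvPolynomial (Fin (κ+1)) (ZMod 2)))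
      = monomial (∑ i ∈ s, f i) (∏ i ∈ s, b i) := by
  classical
  induction s using Finset.cons_induction with
  | empty => simp [monomial_zero', C_1]
  | cons a s ha ih =>
      rw [Finset.prod_cons, ih, monomial_mul, Finset.sum_cons, Finset.prod_cons]

/-- The target exponent. -/
noncomputable def tgt (c : Fin κ → ℕ) (T : ℕ) : Fin (κ + 1) →₀ ℕ :=
  (∑ i, Finsupp.single i.castSucc (c i)) + Finsupp.single (Fin.last κ) T

lemma tgt_castSucc (c : Fin κ → ℕ) (T : ℕ) (i : Fin κ) : tgt c T i.castSucc = c i := by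
  rw [tgt]
  rw [Finsupp.add_apply, Finsupp.finset_sum_apply,
    Finsupp.single_apply, if_neg (Fin.castSucc_lt_last i).ne']
  rw [add_zero]
  rw [Finset.sum_eq_single i (fun j _ hj => ?_) (by simp)]
  · rw [Finsupp.single_apply, if_pos rfl]
  · rw [Finsupp.single_apply, if_neg (by simpa [Fin.castSucc_inj] using hj)]

lemma tgt_last (c : Fin κ → ℕ) (T : ℕ) : tgt c T (Fin.last κ) = T := by
  rw [tgt, Finsupp.add_apply, Finsupp.finset_sum_apply, Finsupp.single_apply, if_pos rfl]
  rw [Finset.sum_eq_zero fun j _ => ?_, zero_add]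
  rw [Finsupp.single_apply, if_neg (Fin.castSucc_lt_last j).ne]

lemma sum_exponents (f g : Fin κ → ℕ) :
    ∑ i : Fin κ, (Finsupp.single i.castSucc (f i) + Finsupp.single (Fin.last κ) (g i))
      = tgt f (∑ i, g i) := by
  rw [Finset.sum_add_distrib, tgt]
  congr 1
  rw [← Finsupp.single_finset_sum]

lemma factor_expand (i : Fin κ) (m : ℕ) :
    ((X i.castSucc + X (Fin.last κ)) ^ m : MvPolynomial (Fin (κ+1)) (ZMod 2))
      = ∑ j ∈ range (m + 1),
          monomial (Finsupp.single i.castSucc j + Finsupp.single (Fin.last κ) (m - j))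
            ((m.choose j : ℕ) : ZMod 2) := by
  rw [add_pow]
  refine Finset.sum_congr rfl fun j hj => ?_
  rw [X_pow_eq_monomial, X_pow_eq_monomial, monomial_mul, mul_one]
  rw [show ((m.choose j : ℕ) : MvPolynomial (Fin (κ+1)) (ZMod 2)) = C ((m.choose j : ℕ) : ZMod 2)
    from (map_natCast C _).symm]
  rw [mul_comm, C_mul_monomial, mul_one]

lemma coeff_prod_eq (a c : Fin κ → ℕ) (hc : ∀ i, c i ≤ a i) :
    coeff (tgt c (∑ i, (a i - c i)))
      (∏ i : Fin κ, ((X i.castSucc + X (Fin.last κ)) ^ a i : MvPolynomial (Fin (κ+1)) (ZMod 2)))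
      = ∏ i, (((a i).choose (c i) : ℕ) : ZMod 2) := by
  classical
  simp_rw [factor_expand]
  rw [Finset.prod_univ_sum]
  have key : ∀ p : Fin κ → ℕ,
      (∏ i : Fin κ, (monomial
          (Finsupp.single i.castSucc (p i) + Finsupp.single (Fin.last κ) (a i - p i))
          (((a i).choose (p i) : ℕ) : ZMod 2) : MvPolynomial (Fin (κ+1)) (ZMod 2)))
        = monomial (tgt p (∑ i, (a i - p i))) (∏ i, (((a i).choose (p i) : ℕ) : ZMod 2)) := by
    intro p
    rw [prod_monomial, sum_exponents]
  simp_rw [key]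
  rw [coeff_sum]
  have hmem : c ∈ Fintype.piFinset (fun i : Fin κ => range (a i + 1)) := by
    rw [Fintype.mem_piFinset]
    intro i
    rw [Finset.mem_range]
    exact Nat.lt_succ_of_le (hc i)
  rw [Finset.sum_eq_single_of_mem c hmem]
  · rw [coeff_monomial, if_pos rfl]
  · intro p _ hp
    rw [coeff_monomial, if_neg]
    intro h
    apply hp
    funext i
    have := congrArg (fun (m : Fin (κ+1) →₀ ℕ) => m i.castSucc) h
    simpa [tgt_castSucc] using this

/-- `(X j + X j')^(2^(e+2))` lies in the truncation ideal for `n = 3·2^e`. -/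
lemma pow_mem (e : ℕ) (j j' : Fin (κ + 1)) :
    ((X j + X j') ^ (2 ^ (e + 2)) : MvPolynomial (Fin (κ+1)) (ZMod 2)) ∈ I κ (3 * 2 ^ e) := by
  have hchar : (X j + X j') ^ (2 ^ (e + 2))
      = (X j : MvPolynomial (Fin (κ+1)) (ZMod 2)) ^ (2 ^ (e + 2)) + X j' ^ (2 ^ (e + 2)) :=
    haveI : Fact (Nat.Prime 2) := ⟨Nat.prime_two⟩
    add_pow_char_pow (X j) (X j') 2 (e + 2)
  rw [hchar]
  have h2 : 2 ^ (e + 2) = (3 * 2 ^ e + 1) + (2 ^ e - 1) := by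
    have h1 : 1 ≤ 2 ^ e := Nat.one_le_two_pow
    have : (2:ℕ) ^ (e + 2) = 2 ^ e * 4 := by rw [pow_add]; norm_num
    omega
  have hX : ∀ i : Fin (κ + 1),
      (X i : MvPolynomial (Fin (κ+1)) (ZMod 2)) ^ (2 ^ (e + 2)) ∈ I κ (3 * 2 ^ e) := by
    intro i
    rw [h2, pow_add]
    exact Ideal.mul_mem_right _ _ (Ideal.subset_span ⟨i, rfl⟩)
  exact Ideal.add_mem _ (hX j) (hX j')

/-- Upper bound on individual exponents. -/
lemma exp_le (e : ℕ) (a : Fin κ → ℕ)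
    (h : (∏ i : Fin κ, ((X i.castSucc + X (Fin.last κ)) ^ a i
        : MvPolynomial (Fin (κ+1)) (ZMod 2))) ∉ I κ (3 * 2 ^ e)) :
    ∀ i, a i ≤ 2 ^ (e + 2) - 1 := by
  intro i
  by_contra hi
  have hA : 2 ^ (e + 2) ≤ a i := by
    have := Nat.one_le_two_pow (n := e + 2)
    omega
  apply h
  rw [← Finset.mul_prod_erase univ _ (mem_univ i),
    show a i = 2 ^ (e + 2) + (a i - 2 ^ (e + 2)) from (Nat.add_sub_cancel' hA).symm,
    pow_add, mul_assoc]
  exact Ideal.mul_mem_right _ _ (pow_mem e _ _)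

/-- Upper bound on the total degree. -/
lemma sum_le (a : Fin κ → ℕ)
    (h : (∏ i : Fin κ, ((X i.castSucc + X (Fin.last κ)) ^ a i
        : MvPolynomial (Fin (κ+1)) (ZMod 2))) ∉ I κ n) :
    ∑ i, a i ≤ (κ + 1) * n := by
  by_contra hgt
  push_neg at hgt
  apply h
  have hhom : (∏ i : Fin κ, ((X i.castSucc + X (Fin.last κ)) ^ a i
      : MvPolynomial (Fin (κ+1)) (ZMod 2))).IsHomogeneous (∑ i, a i) := by
    apply IsHomogeneous.prod
    intro i _
    simpa using ((isHomogeneous_X (ZMod 2) i.castSucc).add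
      (isHomogeneous_X (ZMod 2) (Fin.last κ))).pow (a i)
  set p := ∏ i : Fin κ, ((X i.castSucc + X (Fin.last κ)) ^ a i
      : MvPolynomial (Fin (κ+1)) (ZMod 2)) with hp
  rw [← p.support_sum_monomial_coeff]
  apply Submodule.sum_mem
  intro m hm
  have hcoeff : coeff m p ≠ 0 := mem_support_iff.mp hm
  have hdeg : ∑ j, m j = ∑ i, a i := by
    have hw := hhom hcoeff
    rw [Finsupp.weight_apply] at hw
    simp only [Pi.one_apply, smul_eq_mul, mul_one] at hw
    rw [← hw]
    exact (Finset.sum_subset (Finset.subset_univ _)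
      (fun x _ hx => Finsupp.notMem_support_iff.mp hx)).symm
  have hex : ∃ j, n + 1 ≤ m j := by
    by_contra hall
    push_neg at hall
    have : ∑ j : Fin (κ+1), m j ≤ (κ + 1) * n := by
      calc ∑ j : Fin (κ+1), m j ≤ ∑ _j : Fin (κ+1), n :=
            Finset.sum_le_sum fun j _ => by have := hall j; omega
        _ = (κ + 1) * n := by rw [Finset.sum_const, card_univ, Fintype.card_fin, smul_eq_mul]
    omega
  obtain ⟨j, hj⟩ := hex
  exact monomial_mem j hj

/-- Lower bound: the product with exponents `n + t i` is not in the ideal. -/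
lemma prod_not_mem (e : ℕ) (t : Fin κ → ℕ) (ht : ∀ i, t i ≤ 2 ^ e - 1)
    (hsum : ∑ i, t i ≤ 3 * 2 ^ e) :
    (∏ i : Fin κ, ((X i.castSucc + X (Fin.last κ)) ^ (3 * 2 ^ e + t i)
        : MvPolynomial (Fin (κ+1)) (ZMod 2))) ∉ I κ (3 * 2 ^ e) := by
  intro hmem
  set n := 3 * 2 ^ e with hn
  have hco := coeff_prod_eq (fun i => n + t i) (fun _ => n) (fun i => Nat.le_add_right _ _)
  have hts : (fun i : Fin κ => (n + t i) - n) = t := by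
    funext i; omega
  rw [show (∑ i : Fin κ, ((n + t i) - n)) = ∑ i, t i from by simp_rw [hts]] at hco
  have hone : (∏ i : Fin κ, (((n + t i).choose n : ℕ) : ZMod 2)) = 1 := by
    apply Finset.prod_eq_one
    intro i _
    have hlt : t i < 2 ^ e := by
      have := Nat.one_le_two_pow (n := e)
      have := ht i
      omega
    have hodd := choose_odd e (t i) hlt
    rw [← ZMod.natCast_mod, hodd, Nat.cast_one]
  rw [hone] at hco
  have hzero := coeff_eq_zero_of_mem (m := tgt (fun _ => n) (∑ i, t i)) ?_ hmem
  · rw [hco] at hzero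
    exact one_ne_zero hzero
  · intro j
    induction j using Fin.lastCases with
    | last => rw [tgt_last]; exact hsum
    | cast i => rw [tgt_castSucc]

lemma sSup_eq {κ n : ℕ} (V : ℕ)
    (hmem : ∃ a : Fin κ → ℕ, V = ∑ i, a i ∧
      (∏ i : Fin κ, ((X i.castSucc + X (Fin.last κ)) ^ a i
        : MvPolynomial (Fin (κ+1)) (ZMod 2))) ∉ I κ n)
    (hub : ∀ a : Fin κ → ℕ,
      (∏ i : Fin κ, ((X i.castSucc + X (Fin.last κ)) ^ a i
        : MvPolynomial (Fin (κ+1)) (ZMod 2))) ∉ I κ n → ∑ i, a i ≤ V) :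
    sSup {s : ℕ | ∃ a : Fin κ → ℕ, s = ∑ i, a i ∧
      Ideal.Quotient.mk (Ideal.span (Set.range fun i : Fin (κ + 1) =>
        (X i : MvPolynomial (Fin (κ + 1)) (ZMod 2)) ^ (n + 1)))
        (∏ i : Fin κ, (X i.castSucc + X (Fin.last κ)) ^ a i) ≠ 0} = V := by
  have hiff : ∀ p : MvPolynomial (Fin (κ+1)) (ZMod 2),
      Ideal.Quotient.mk (I κ n) p ≠ 0 ↔ p ∉ I κ n := fun p =>
    not_congr Ideal.Quotient.eq_zero_iff_mem
  obtain ⟨a₀, hV, h₀⟩ := hmem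
  set S : Set ℕ := {s : ℕ | ∃ a : Fin κ → ℕ, s = ∑ i, a i ∧
      Ideal.Quotient.mk (Ideal.span (Set.range fun i : Fin (κ + 1) =>
        (X i : MvPolynomial (Fin (κ + 1)) (ZMod 2)) ^ (n + 1)))
        (∏ i : Fin κ, (X i.castSucc + X (Fin.last κ)) ^ a i) ≠ 0} with hS
  have hVmem : V ∈ S := ⟨a₀, hV, (hiff _).mpr h₀⟩
  have hubS : ∀ s ∈ S, s ≤ V := by
    rintro s ⟨a, rfl, hne⟩
    exact hub a ((hiff _).mp hne)
  exact le_antisymm (csSup_le ⟨V, hVmem⟩ hubS) (le_csSup ⟨V, hubS⟩ hVmem)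

end ZclAux

/-- For `k ≥ 2` and `e ≥ 1`: `zcl_k(3*2^e) = (k-1)(2^(e+2) - 1)` if `(e = 1 and k ≤ 6)`
or `(e ≥ 2 and k ≤ 4)`, and `zcl_k(3*2^e) = 3k*2^e` otherwise. -/
theorem zcl_three_pow (k e : ℕ) (hk : 2 ≤ k) (he : 1 ≤ e) :
    zcl k (3 * 2 ^ e) =
      if (e = 1 ∧ k ≤ 6) ∨ (2 ≤ e ∧ k ≤ 4) then (k - 1) * (2 ^ (e + 2) - 1)
      else k * (3 * 2 ^ e) := by
  have hP1 : 1 ≤ 2 ^ e := Nat.one_le_two_pow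
  have hA : (2:ℕ) ^ (e + 2) = 4 * 2 ^ e := by rw [pow_add]; ring
  unfold zcl
  apply ZclAux.sSup_eq
  · -- existence of a maximizing tuple
    by_cases hcond : (e = 1 ∧ k ≤ 6) ∨ (2 ≤ e ∧ k ≤ 4)
    · rw [if_pos hcond]
      refine ⟨fun _ => 3 * 2 ^ e + (2 ^ e - 1), ?_, ?_⟩
      · rw [Finset.sum_const, card_univ, Fintype.card_fin, smul_eq_mul]
        congr 1
        omega
      · apply ZclAux.prod_not_mem e (fun _ => 2 ^ e - 1) (fun _ => le_rfl)
        rw [Finset.sum_const, card_univ, Fintype.card_fin, smul_eq_mul]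
        rcases hcond with ⟨he1, hk6⟩ | ⟨he2, hk4⟩
        · subst he1
          norm_num
          omega
        · have h3 : k - 1 ≤ 3 := by omega
          calc (k - 1) * (2 ^ e - 1) ≤ 3 * (2 ^ e - 1) := Nat.mul_le_mul_right _ h3
            _ ≤ 3 * 2 ^ e := by omega
    · rw [if_neg hcond]
      push_neg at hcond
      set c := 2 ^ e - 1 with hc
      have hκc : 3 * 2 ^ e ≤ (k - 1) * c := by
        rcases Nat.lt_or_ge e 2 with h | h
        · have he1 : e = 1 := by omega
          have hk7 : 7 ≤ k := by
            have := hcond.1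
            omega
          subst he1
          norm_num [hc]
          omega
        · have hk5 : 5 ≤ k := by
            have := hcond.2
            omega
          have hP4 : 4 ≤ 2 ^ e := by
            calc (4:ℕ) = 2 ^ 2 := rfl
              _ ≤ 2 ^ e := Nat.pow_le_pow_right (by norm_num) h
          have h4c : 4 * c ≤ (k - 1) * c := Nat.mul_le_mul_right _ (by omega)
          omega
      have hmono : Monotone (fun j : ℕ => min (j * c) (3 * 2 ^ e)) := by
        intro x y hxy
        exact min_le_min (Nat.mul_le_mul_right _ hxy) le_rfl
      have hsum : ∑ i : Fin (k - 1),
          (min ((i.val + 1) * c) (3 * 2 ^ e) - min (i.val * c) (3 * 2 ^ e)) = 3 * 2 ^ e := by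
        rw [Fin.sum_univ_eq_sum_range
          (fun j => min ((j + 1) * c) (3 * 2 ^ e) - min (j * c) (3 * 2 ^ e)) (k - 1)]
        rw [Finset.sum_range_tsub hmono]
        simp only [zero_mul, Nat.zero_min, Nat.min_eq_right hκc]
        omega
      have ht : ∀ i : Fin (k - 1),
          min ((i.val + 1) * c) (3 * 2 ^ e) - min (i.val * c) (3 * 2 ^ e) ≤ c := by
        intro i
        have hx : (i.val + 1) * c = i.val * c + c := by ring
        rw [hx]
        omega
      refine ⟨fun i : Fin (k - 1) => 3 * 2 ^ e +
        (min ((i.val + 1) * c) (3 * 2 ^ e) - min (i.val * c) (3 * 2 ^ e)), ?_, ?_⟩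
      · rw [Finset.sum_add_distrib, Finset.sum_const, card_univ, Fintype.card_fin,
          smul_eq_mul, hsum]
        conv_lhs => rw [show k = (k - 1) + 1 from by omega]
        rw [add_one_mul]
      · exact ZclAux.prod_not_mem e _ ht (le_of_eq hsum)
  · -- upper bound
    intro a hnot
    by_cases hcond : (e = 1 ∧ k ≤ 6) ∨ (2 ≤ e ∧ k ≤ 4)
    · rw [if_pos hcond]
      have h1 := ZclAux.exp_le e a hnot
      calc ∑ i, a i ≤ ∑ _i : Fin (k - 1), (2 ^ (e + 2) - 1) :=
            Finset.sum_le_sum fun i _ => h1 i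
        _ = (k - 1) * (2 ^ (e + 2) - 1) := by
            rw [Finset.sum_const, card_univ, Fintype.card_fin, smul_eq_mul]
    · rw [if_neg hcond]
      have h2 := ZclAux.sum_le a hnot
      have hk1 : k - 1 + 1 = k := by omega
      rw [hk1] at h2
      exact h2
end

section
/- For all v ≥ 1 and all k ≥ 2, zcl_k(2^v − 1) = (k−1)(2^v − 1); equivalently, g_k(2^v − 1) = k(2^v − 1) − zcl_k(2^v − 1) = 2^v − 1. -/
namespace MvPolynomial

noncomputable def truncIdeal (σ R : Type*) [CommSemiring R] (n : ℕ) : Ideal (MvPolynomial σ R) :=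
  Ideal.span (Set.range fun i => X i ^ (n + 1))

section CommSemiring

variable {σ R : Type*} [CommSemiring R]

theorem X_pow_mem_truncIdeal (n : ℕ) (i : σ) :
    (X i : MvPolynomial σ R) ^ (n + 1) ∈ truncIdeal σ R n :=
  Ideal.subset_span ⟨i, rfl⟩

theorem monomial_one_mem_truncIdeal_iff [Nontrivial R] {n : ℕ} {m : σ →₀ ℕ} :
    monomial m (1 : R) ∈ truncIdeal σ R n ↔ ∃ i, n < m i := by
  classical
  have hspan : truncIdeal σ R n =
      Ideal.span ((fun s => monomial s 1) '' Set.range fun i => Finsupp.single i (n + 1)) := by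
    rw [← Set.range_comp]
    simp only [truncIdeal, Function.comp_def, X_pow_eq_monomial]
  rw [hspan, mem_ideal_span_monomial_image, support_monomial, if_neg one_ne_zero]
  simp only [Finset.mem_singleton, forall_eq, Set.mem_range, exists_exists_eq_and,
    Finsupp.single_le_iff]
  exact exists_congr fun _ => Nat.add_one_le_iff

theorem prod_X_pow_not_mem_truncIdeal [Nontrivial R] [Fintype σ] (n : ℕ) :
    ∏ j, (X j : MvPolynomial σ R) ^ n ∉ truncIdeal σ R n := by
  classical
  simp_rw [X_pow_eq_monomial, ← monomial_sum_one, monomial_one_mem_truncIdeal_iff,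
    Finsupp.finsetSum_apply, Finsupp.single_apply]
  simp

theorem truncIdeal_le_comap {τ : Type*} {n : ℕ}
    (φ : MvPolynomial σ R →ₐ[R] MvPolynomial τ R) (hφ : ∀ j, φ (X j) ^ (n + 1) ∈ truncIdeal τ R n) :
    truncIdeal σ R n ≤ (truncIdeal τ R n).comap φ := by
  rw [truncIdeal, Ideal.span_le]
  rintro _ ⟨j, rfl⟩
  simpa using hφ j

end CommSemiring

section CommRing

variable {R : Type*} [CommRing R] {p n v : ℕ} [ExpChar R p]

theorem X_add_X_pow_mem_truncIdeal {σ : Type*} (hn : n + 1 = p ^ v) (i j : σ) :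
    (X i + X j : MvPolynomial σ R) ^ (n + 1) ∈ truncIdeal σ R n := by
  rw [hn, add_pow_expChar_pow, ← hn]
  exact add_mem (X_pow_mem_truncIdeal n i) (X_pow_mem_truncIdeal n j)

theorem X_sub_X_pow_mem_truncIdeal {σ : Type*} (hn : n + 1 = p ^ v) (i j : σ) :
    (X i - X j : MvPolynomial σ R) ^ (n + 1) ∈ truncIdeal σ R n := by
  rw [hn, sub_pow_expChar_pow, ← hn]
  exact sub_mem (X_pow_mem_truncIdeal n i) (X_pow_mem_truncIdeal n j)

variable {m : ℕ}

theorem prod_X_add_X_last_pow_mem_truncIdeal (hn : n + 1 = p ^ v) {a : Fin m → ℕ} {j : Fin m}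
    (hj : n < a j) :
    ∏ i : Fin m, (X i.castSucc + X (Fin.last m) : MvPolynomial (Fin (m + 1)) R) ^ a i ∈
      truncIdeal (Fin (m + 1)) R n :=
  Ideal.mem_of_dvd _ (Finset.dvd_prod_of_mem _ (Finset.mem_univ j))
    (Ideal.pow_mem_of_pow_mem _ (X_add_X_pow_mem_truncIdeal hn _ _) hj)

theorem prod_X_add_X_last_pow_not_mem_truncIdeal [Nontrivial R] (hn : n + 1 = p ^ v) :
    ∏ i : Fin m, (X i.castSucc + X (Fin.last m) : MvPolynomial (Fin (m + 1)) R) ^ n ∉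
      truncIdeal (Fin (m + 1)) R n := by
  intro hmem
  let φ : MvPolynomial (Fin (m + 1)) R →ₐ[R] MvPolynomial (Fin (m + 1)) R :=
    aeval (Fin.lastCases (X (Fin.last m)) fun i => X i.castSucc - X (Fin.last m))
  have hφ : ∀ j, φ (X j) ^ (n + 1) ∈ truncIdeal (Fin (m + 1)) R n := by
    intro j
    cases j using Fin.lastCases with
    | last => simpa [φ] using X_pow_mem_truncIdeal n (Fin.last m)
    | cast i => simpa [φ] using X_sub_X_pow_mem_truncIdeal hn i.castSucc (Fin.last m)
  have himage :
      φ (∏ i : Fin m, (X i.castSucc + X (Fin.last m)) ^ n) = ∏ i : Fin m, X i.castSucc ^ n := by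
    simp [φ]
  have himage_mem := truncIdeal_le_comap φ hφ hmem
  rw [Ideal.mem_comap, himage] at himage_mem
  refine prod_X_pow_not_mem_truncIdeal (R := R) n (Ideal.mem_of_dvd _ ?_ himage_mem)
  rw [Fin.prod_univ_castSucc]
  exact dvd_mul_right _ _

end CommRing

end MvPolynomial

open MvPolynomial

theorem zcl_eq_of_add_one_eq_two_pow {k n v : ℕ} (hn : n + 1 = 2 ^ v) :
    zcl k n = (k - 1) * n := by
  refine IsGreatest.csSup_eq ⟨⟨fun _ => n, by simp, ?_⟩, ?_⟩
  · rw [Ne, Ideal.Quotient.eq_zero_iff_mem]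
    exact prod_X_add_X_last_pow_not_mem_truncIdeal hn
  · rintro _ ⟨a, rfl, ha⟩
    have hle : ∀ i, a i ≤ n := fun i => not_lt.mp fun hi =>
      ha (Ideal.Quotient.eq_zero_iff_mem.mpr (prod_X_add_X_last_pow_mem_truncIdeal hn hi))
    simpa using Finset.sum_le_sum (s := Finset.univ) fun i _ => hle i

theorem zcl_two_pow_sub_one_general (v k : ℕ) (hk : 2 ≤ k) :
    zcl k (2 ^ v - 1) = (k - 1) * (2 ^ v - 1) ∧
      k * (2 ^ v - 1) - zcl k (2 ^ v - 1) = 2 ^ v - 1 := by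
  have hzcl : zcl k (2 ^ v - 1) = (k - 1) * (2 ^ v - 1) :=
    zcl_eq_of_add_one_eq_two_pow (Nat.sub_add_cancel Nat.one_le_two_pow)
  refine ⟨hzcl, ?_⟩
  rw [hzcl, ← Nat.sub_mul, Nat.sub_sub_self (by omega), one_mul]

/-- For all `v ≥ 1` and `k ≥ 2`, `zcl_k(2^v - 1) = (k-1)(2^v - 1)`; equivalently,
`g_k(2^v - 1) = k(2^v - 1) - zcl_k(2^v - 1) = 2^v - 1`. -/
theorem zcl_two_pow_sub_one (v k : ℕ) (hv : 1 ≤ v) (hk : 2 ≤ k) :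
    zcl k (2 ^ v - 1) = (k - 1) * (2 ^ v - 1) ∧
      k * (2 ^ v - 1) - zcl k (2 ^ v - 1) = 2 ^ v - 1 :=
  zcl_two_pow_sub_one_general v k hk
end

section
/- If 2^e ≤ n < 2^{e+1}, then zcl_2(n) = 2^{e+1} − 1. -/
lemma choose_two_pow_sub_one_odd (m : ℕ) : ∀ k ≤ 2 ^ m - 1, Nat.choose (2 ^ m - 1) k % 2 = 1 := by
  induction m with
  | zero => intro k hk; interval_cases k <;> simp
  | succ m ih =>
    intro k hk
    have h2 : 2 ^ (m + 1) = 2 * 2 ^ m := by ring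
    have h1 : (1 : ℕ) ≤ 2 ^ m := Nat.one_le_two_pow
    have key := Choose.choose_modEq_choose_mod_mul_choose_div_nat
      (n := 2 ^ (m + 1) - 1) (k := k) (p := 2)
    have hmod : (2 ^ (m + 1) - 1) % 2 = 1 := by omega
    have hdiv : (2 ^ (m + 1) - 1) / 2 = 2 ^ m - 1 := by omega
    have hkd : k / 2 ≤ 2 ^ m - 1 := by omega
    have hk2 : Nat.choose 1 (k % 2) = 1 := by
      have : k % 2 = 0 ∨ k % 2 = 1 := by omega
      rcases this with h | h <;> simp [h]
    rw [hmod, hdiv, hk2, one_mul] at key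
    have := ih (k / 2) hkd
    unfold Nat.ModEq at key
    omega

open MvPolynomial in
/-- If `2^e ≤ n < 2^(e+1)`, then `zcl_2(n) = 2^(e+1) - 1`. -/
theorem zcl_two (e n : ℕ) (h1 : 2 ^ e ≤ n) (h2 : n < 2 ^ (e + 1)) :
    zcl 2 n = 2 ^ (e + 1) - 1 := by
  classical
  set I : Ideal (MvPolynomial (Fin 2) (ZMod 2)) :=
    Ideal.span (Set.range fun i : Fin 2 => (X i : MvPolynomial (Fin 2) (ZMod 2)) ^ (n + 1)) with hI
  -- membership characterization
  have hXmem : ∀ i : Fin 2, ∀ c : ℕ, n + 1 ≤ c →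
      (X i : MvPolynomial (Fin 2) (ZMod 2)) ^ c ∈ I := by
    intro i c hc
    have : (X i : MvPolynomial (Fin 2) (ZMod 2)) ^ c
        = X i ^ (n + 1) * X i ^ (c - (n + 1)) := by
      rw [← pow_add]; congr 1; omega
    rw [this]
    exact I.mul_mem_right _ (Ideal.subset_span ⟨i, rfl⟩)
  -- upper bound: large powers die
  have hbig : ∀ a : ℕ, 2 ^ (e + 1) ≤ a →
      ((X 0 + X 1 : MvPolynomial (Fin 2) (ZMod 2)) ^ a) ∈ I := by
    intro a ha
    have : (X 0 + X 1 : MvPolynomial (Fin 2) (ZMod 2)) ^ a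
        = (X 0 + X 1) ^ (2 ^ (e + 1)) * (X 0 + X 1) ^ (a - 2 ^ (e + 1)) := by
      rw [← pow_add]; congr 1; omega
    rw [this, add_pow_char_pow]
    exact I.mul_mem_right _ (I.add_mem (hXmem 0 _ (by omega)) (hXmem 1 _ (by omega)))
  -- lower bound: (X 0 + X 1)^(2^(e+1)-1) ∉ I
  set a : ℕ := 2 ^ (e + 1) - 1 with haa
  have hna : n ≤ a := by omega
  have hban : a - n ≤ n := by
    have : 2 ^ (e + 1) = 2 * 2 ^ e := by ring
    omega
  set d : Fin 2 →₀ ℕ := Finsupp.single 0 n + Finsupp.single 1 (a - n) with hd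
  have hd0 : d 0 = n := by simp [hd]
  have hd1 : d 1 = a - n := by simp [hd]
  have hcoeff : coeff d ((X 0 + X 1 : MvPolynomial (Fin 2) (ZMod 2)) ^ a)
      = (Nat.choose a n : ZMod 2) := by
    rw [add_pow]
    rw [coeff_sum]
    have hterm : ∀ k ∈ Finset.range (a + 1),
        coeff d ((X 0 : MvPolynomial (Fin 2) (ZMod 2)) ^ k * X 1 ^ (a - k) * (a.choose k : MvPolynomial (Fin 2) (ZMod 2)))
          = if k = n then (a.choose n : ZMod 2) else 0 := by
      intro k hk
      rw [Finset.mem_range] at hk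
      have hmon : (X 0 : MvPolynomial (Fin 2) (ZMod 2)) ^ k * X 1 ^ (a - k)
          = monomial (Finsupp.single 0 k + Finsupp.single 1 (a - k)) 1 := by
        rw [X_pow_eq_monomial, X_pow_eq_monomial, monomial_mul, mul_one]
      have hnc : (a.choose k : MvPolynomial (Fin 2) (ZMod 2)) = C (a.choose k : ZMod 2) :=
        (map_natCast C _).symm
      rw [hmon, hnc, mul_comm, C_mul_monomial, mul_one, coeff_monomial]
      by_cases hkn : k = n
      · subst hkn
        rw [if_pos, if_pos rfl]
        rfl
      · rw [if_neg, if_neg hkn]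
        intro hEq
        apply hkn
        have := DFunLike.congr_fun hEq (0 : Fin 2)
        simpa [hd, Finsupp.single_apply] using this
    rw [Finset.sum_congr rfl hterm, Finset.sum_ite_eq' (Finset.range (a + 1)) n]
    rw [if_pos (by rw [Finset.mem_range]; omega)]
  have hodd : (Nat.choose a n : ZMod 2) ≠ 0 := by
    have := choose_two_pow_sub_one_odd (e + 1) n hna
    rw [show (Nat.choose a n : ZMod 2) = ((Nat.choose a n % 2 : ℕ) : ZMod 2) from
      (ZMod.natCast_mod _ 2).symm, this]
    simp
  have hnotmem : ((X 0 + X 1 : MvPolynomial (Fin 2) (ZMod 2)) ^ a) ∉ I := by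
    intro hmem
    have himg : (Set.range fun i : Fin 2 => (X i : MvPolynomial (Fin 2) (ZMod 2)) ^ (n + 1))
        = (fun s => monomial s (1 : ZMod 2)) '' (Set.range fun i : Fin 2 => Finsupp.single i (n + 1)) := by
      rw [← Set.range_comp]
      apply congrArg
      funext i
      exact X_pow_eq_monomial
    rw [hI, himg, mem_ideal_span_monomial_image] at hmem
    have hdsupp : d ∈ ((X 0 + X 1 : MvPolynomial (Fin 2) (ZMod 2)) ^ a).support := by
      rw [mem_support_iff, hcoeff]; exact hodd
    obtain ⟨s, ⟨i, rfl⟩, hle⟩ := hmem d hdsupp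
    rw [Finsupp.single_le_iff] at hle
    fin_cases i <;> simp only [hd, Finsupp.add_apply, Finsupp.single_apply] at hle <;>
      simp at hle <;> omega
  -- now compute the sSup
  have hset : {s : ℕ | ∃ b : Fin (2 - 1) → ℕ, s = ∑ i, b i ∧
      Ideal.Quotient.mk
        (Ideal.span (Set.range fun i : Fin (2 - 1 + 1) =>
          (X i : MvPolynomial (Fin (2 - 1 + 1)) (ZMod 2)) ^ (n + 1)))
        (∏ i : Fin (2 - 1), (X i.castSucc + X (Fin.last (2 - 1))) ^ b i) ≠ 0}
      = {s : ℕ | ((X 0 + X 1 : MvPolynomial (Fin 2) (ZMod 2)) ^ s) ∉ I} := by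
    ext s
    simp only [Set.mem_setOf_eq]
    constructor
    · rintro ⟨b, rfl, hb⟩
      rw [Fin.sum_univ_one]
      rw [Fin.prod_univ_one] at hb
      intro hmem
      exact hb (by rwa [Ideal.Quotient.eq_zero_iff_mem])
    · intro hs
      refine ⟨fun _ => s, by rw [Fin.sum_univ_one], ?_⟩
      rw [Fin.prod_univ_one]
      rw [Ne, Ideal.Quotient.eq_zero_iff_mem]
      exact hs
  rw [zcl, hset]
  apply IsGreatest.csSup_eq
  constructor
  · exact hnotmem
  · intro s hs
    by_contra hlt
    push_neg at hlt
    exact hs (hbig s (by omega))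
end
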